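/- arXiv:2211.01074 — 13 statements merged into one kernel-verified Lean document; each statement's English description precedes it below -/
import Mathlib

section
/- Let F be a field and let L be a left Leibniz algebra over F with dim_F L = 3. Suppose L is not a Lie algebra (i.e., there exists a ∈ L with [a,a] ≠ 0). Then L is soluble; in fact, writing δ_0(L) = L and δ_{n+1}(L) = [δ_n(L), δ_n(L)] (the subspace spanned by all brackets of elements of δ_n(L)), one has δ_3(L) = 0. -/
open Module Polynomial

variable {F L : Type*} [Field F] [AddCommGroup L] [Module F L]

/-- The left Leibniz identity for a bilinear bracket. -/
def IsLeibniz (β : L →ₗ[F] L →ₗ[F] L) : Prop :=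
  ∀ a b c : L, β (β a b) c = β a (β b c) - β b (β a c)

/-- The Leibniz kernel `Leib(L)`: the subspace spanned by all squares `[a,a]`. -/
def leibKer (β : L →ₗ[F] L →ₗ[F] L) : Submodule F L :=
  Submodule.span F (Set.range fun a => β a a)

/-- The center `ζ(L)` of a Leibniz algebra. -/
def lzCenter (β : L →ₗ[F] L →ₗ[F] L) : Submodule F L where
  carrier := {x | ∀ y, β x y = 0 ∧ β y x = 0}
  add_mem' := by
    intro a b ha hb y
    refine ⟨?_, ?_⟩
    · rw [map_add, LinearMap.add_apply, (ha y).1, (hb y).1, add_zero]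
    · rw [map_add, (ha y).2, (hb y).2, add_zero]
  zero_mem' := by
    intro y
    refine ⟨?_, ?_⟩ <;> simp
  smul_mem' := by
    intro c a ha y
    refine ⟨?_, ?_⟩
    · rw [map_smul, LinearMap.smul_apply, (ha y).1, smul_zero]
    · rw [map_smul, (ha y).2, smul_zero]

/-- The derived subalgebra `[L,L]`. -/
def leibDerived (β : L →ₗ[F] L →ₗ[F] L) : Submodule F L :=
  Submodule.span F {x | ∃ a b : L, β a b = x}

/-- The lower central series: `leibGamma β 1 = ⊤`, `leibGamma β (k+1) = [L, leibGamma β k]`. -/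
def leibGamma (β : L →ₗ[F] L →ₗ[F] L) : ℕ → Submodule F L
  | 0 => ⊤
  | 1 => ⊤
  | (n+2) => Submodule.span F {x | ∃ a b : L, b ∈ leibGamma β (n+1) ∧ β a b = x}

/-- The derived series: `leibDelta β 0 = ⊤`, `leibDelta β (n+1) = [leibDelta β n, leibDelta β n]`. -/
def leibDelta (β : L →ₗ[F] L →ₗ[F] L) : ℕ → Submodule F L
  | 0 => ⊤
  | (n+1) => Submodule.span F
      {x | ∃ a ∈ leibDelta β n, ∃ b ∈ leibDelta β n, β a b = x}

/-- Multiplication table predicate: the brackets of the triple `a` are given by `t`. -/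
def MulTbl (β : L →ₗ[F] L →ₗ[F] L) (a : Fin 3 → L) (t : Fin 3 → Fin 3 → L) : Prop :=
  ∀ i j, β (a i) (a j) = t i j

/-- Squares left-annihilate everything, so the Leibniz kernel lies in the left kernel. -/
lemma leibKer_le_ker (β : L →ₗ[F] L →ₗ[F] L) (hLeib : IsLeibniz β) :
    leibKer β ≤ LinearMap.ker β := by
  rw [leibKer, Submodule.span_le]
  rintro _ ⟨a, rfl⟩
  simp only [SetLike.mem_coe, LinearMap.mem_ker]
  ext c
  simp [hLeib a a c]

/-- If `β x = 0`, then `β c x ∈ leibKer β`. -/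
lemma bracket_mem_leibKer (β : L →ₗ[F] L →ₗ[F] L) (c x : L) (hx : β x = 0) :
    β c x ∈ leibKer β := by
  have h : β c x = β (c + x) (c + x) - β c c := by
    simp only [map_add, LinearMap.add_apply, hx, LinearMap.zero_apply]
    abel
  rw [h]
  exact sub_mem (Submodule.subset_span ⟨c + x, rfl⟩) (Submodule.subset_span ⟨c, rfl⟩)

/-- The induced bracket on the quotient by the Leibniz kernel. -/
noncomputable def qB (β : L →ₗ[F] L →ₗ[F] L) (hLeib : IsLeibniz β) :
    (L ⧸ leibKer β) →ₗ[F] (L ⧸ leibKer β) →ₗ[F] (L ⧸ leibKer β) :=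
  Submodule.liftQ _
    { toFun := fun a => Submodule.liftQ _ ((leibKer β).mkQ ∘ₗ β a)
        (by
          intro x hx
          simp only [LinearMap.mem_ker, LinearMap.comp_apply, Submodule.mkQ_apply,
            Submodule.Quotient.mk_eq_zero]
          exact bracket_mem_leibKer β a x (leibKer_le_ker β hLeib hx))
      map_add' := fun a b => by
        apply Submodule.linearMap_qext
        ext x
        simp
      map_smul' := fun c a => by
        apply Submodule.linearMap_qext
        ext x
        simp }
    (by
      intro x hx
      simp only [LinearMap.mem_ker]
      apply Submodule.linearMap_qext
      ext y
      have hx0 : β x = 0 := leibKer_le_ker β hLeib hx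
      simp [LinearMap.coe_mk, AddHom.coe_mk, hx0])

lemma qB_mk (β : L →ₗ[F] L →ₗ[F] L) (hLeib : IsLeibniz β) (a b : L) :
    qB β hLeib ((leibKer β).mkQ a) ((leibKer β).mkQ b) = (leibKer β).mkQ (β a b) := rfl

lemma qB_alt (β : L →ₗ[F] L →ₗ[F] L) (hLeib : IsLeibniz β) (q : L ⧸ leibKer β) :
    qB β hLeib q q = 0 := by
  obtain ⟨a, rfl⟩ := (leibKer β).mkQ_surjective q
  rw [qB_mk]
  simp only [Submodule.mkQ_apply, Submodule.Quotient.mk_eq_zero]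
  exact Submodule.subset_span ⟨a, rfl⟩

theorem stmt0 (β : L →ₗ[F] L →ₗ[F] L) (hLeib : IsLeibniz β)
    (hdim : finrank F L = 3) (hnotLie : ∃ a : L, β a a ≠ 0) :
    (∃ n : ℕ, leibDelta β n = ⊥) ∧ leibDelta β 3 = ⊥ := by
  have hfin : FiniteDimensional F L := FiniteDimensional.of_finrank_pos (by omega)
  set K : Submodule F L := leibKer β with hK
  set Q := L ⧸ K with hQdef
  set B := qB β hLeib with hB
  -- the Leibniz kernel is nonzero
  have hKne : K ≠ ⊥ := by
    obtain ⟨a, ha⟩ := hnotLie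
    intro h
    have : β a a ∈ K := Submodule.subset_span ⟨a, rfl⟩
    rw [h, Submodule.mem_bot] at this
    exact ha this
  have hKpos : 0 < finrank F K := by
    rcases Submodule.ne_bot_iff K |>.mp hKne with ⟨x, hxK, hx0⟩
    haveI : Nontrivial K := ⟨⟨x, hxK⟩, 0, by simpa using hx0⟩
    exact Module.finrank_pos_iff.mpr this
  have hQ2 : finrank F Q ≤ 2 := by
    have h1 := Submodule.finrank_quotient_add_finrank K
    have h2 : finrank F Q = finrank F (L ⧸ K) := rfl
    omega
  -- a spanning pair for Q
  obtain ⟨e, f, hef⟩ : ∃ e f : Q, ∀ x : Q, ∃ c d : F, x = c • e + d • f := by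
    have hQfin : FiniteDimensional F Q := inferInstance
    set n := finrank F Q with hn
    let b : Basis (Fin n) F Q := Module.finBasis F Q
    let g : Fin 2 → Q := fun i => if h : (i : ℕ) < n then b ⟨i, h⟩ else 0
    refine ⟨g 0, g 1, fun x => ?_⟩
    have hx : x ∈ Submodule.span F {g 0, g 1} := by
      have hb : Submodule.span F (Set.range b) = ⊤ := b.span_eq
      have hsub : Set.range b ⊆ {g 0, g 1} := by
        rintro _ ⟨j, rfl⟩
        have hj2 : (j : ℕ) < 2 := lt_of_lt_of_le j.2 hQ2
        have : b j = g ⟨j, hj2⟩ := by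
          simp only [g, Fin.eta, dif_pos j.2]
        rw [this]
        have hj01 : (j : ℕ) = 0 ∨ (j : ℕ) = 1 := by omega
        rcases hj01 with h | h
        · left; congr 1; exact Fin.ext h
        · right; simp only [Set.mem_singleton_iff]; congr 1; exact Fin.ext h
      have hle := Submodule.span_mono (R := F) hsub
      rw [hb] at hle
      exact hle Submodule.mem_top
    rcases Submodule.mem_span_pair.mp hx with ⟨c, d, hcd⟩
    exact ⟨c, d, hcd.symm⟩
  -- every bracket in Q is a multiple of B e f
  have himg : ∀ x y : Q, ∃ c : F, B x y = c • B e f := by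
    have hee : B e e = 0 := qB_alt β hLeib e
    have hff : B f f = 0 := qB_alt β hLeib f
    have hfe : B f e = -B e f := by
      have h := qB_alt β hLeib (e + f)
      simp only [map_add, LinearMap.add_apply, hee, hff, ← hB] at h
      linear_combination (norm := abel) h
    intro x y
    obtain ⟨a, b, rfl⟩ := hef x
    obtain ⟨c, d, rfl⟩ := hef y
    refine ⟨a * d - b * c, ?_⟩
    simp only [map_add, map_smul, LinearMap.add_apply, LinearMap.smul_apply,
      hee, hff, hfe, smul_zero, smul_neg, zero_add, add_zero]
    module
  -- the key: second derived brackets land in K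
  have hkey : ∀ x y u v : L, β (β x y) (β u v) ∈ K := by
    intro x y u v
    have h1 : B (B (K.mkQ x) (K.mkQ y)) (B (K.mkQ u) (K.mkQ v)) = K.mkQ (β (β x y) (β u v)) := by
      rw [hB, qB_mk, qB_mk, qB_mk]
    obtain ⟨c, hc⟩ := himg (K.mkQ x) (K.mkQ y)
    obtain ⟨d, hd⟩ := himg (K.mkQ u) (K.mkQ v)
    have h2 : B (B (K.mkQ x) (K.mkQ y)) (B (K.mkQ u) (K.mkQ v)) = 0 := by
      rw [hc, hd]
      simp only [map_smul, LinearMap.smul_apply]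
      rw [hB, qB_alt]
      simp
    rw [h2] at h1
    rw [← Submodule.Quotient.mk_eq_zero, ← Submodule.mkQ_apply]
    exact h1.symm
  -- δ₂ ≤ K
  have hD2 : leibDelta β 2 ≤ K := by
    have hgen : ∀ a ∈ leibDelta β 1, ∀ b ∈ leibDelta β 1, β a b ∈ K := by
      intro a ha
      induction ha using Submodule.span_induction with
      | mem a hmem =>
        obtain ⟨x, -, y, -, rfl⟩ := hmem
        intro b hb
        induction hb using Submodule.span_induction with
        | mem b hmemb =>
          obtain ⟨u, -, v, -, rfl⟩ := hmemb
          exact hkey x y u v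
        | zero => simp
        | add b c _ _ hb hc => rw [map_add]; exact add_mem hb hc
        | smul t b _ hb => rw [map_smul]; exact Submodule.smul_mem _ _ hb
      | zero => intro b _; simp
      | add a c _ _ ha hc => intro b hb; rw [map_add, LinearMap.add_apply];
                             exact add_mem (ha b hb) (hc b hb)
      | smul t a _ ha => intro b hb; rw [map_smul, LinearMap.smul_apply];
                         exact Submodule.smul_mem _ _ (ha b hb)
    show Submodule.span F {x | ∃ a ∈ leibDelta β 1, ∃ b ∈ leibDelta β 1, β a b = x} ≤ K
    rw [Submodule.span_le]
    rintro _ ⟨a, ha, b, hb, rfl⟩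
    exact hgen a ha b hb
  -- δ₃ = ⊥
  have hD3 : leibDelta β 3 = ⊥ := by
    rw [le_bot_iff.symm]
    show Submodule.span F {x | ∃ a ∈ leibDelta β 2, ∃ b ∈ leibDelta β 2, β a b = x} ≤ ⊥
    rw [Submodule.span_le]
    rintro _ ⟨a, ha, b, hb, rfl⟩
    have : β a = 0 := leibKer_le_ker β hLeib (hD2 ha)
    simp [this]
  exact ⟨⟨3, hD3⟩, hD3⟩
end

section
/- Let F be a field and let L be a left Leibniz algebra over F with dim_F L = 3 which is not a Lie algebra. Assume Leib(L) ⊆ ζ(L), dim_F Leib(L) = 1, and L/Leib(L) is abelian. Then there exists a basis (a1, a2, a3) of L such that the bracket is given by one of the following multiplication tables (all brackets of basis vectors not listed being zero): (i) [a1,a1] = a3; (ii) [a1,a1] = [a1,a2] = a3; (iii) [a1,a1] = [a2,a1] = a3; (iv) [a1,a1] = [a2,a1] = a3 and [a1,a2] = α·a3 for some α ∈ F, α ≠ 0; (v) [a1,a1] = a3 and [a2,a2] = β·a3 for some β ∈ F with β ≠ 0 and x² + β ≠ 0 for all x ∈ F; (vi) [a1,a1] = a3, [a1,a2] = α·a3,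 [a2,a2] = β·a3 for some α, β ∈ F with α ≠ 0, β ≠ 0 and x² + αx + β ≠ 0 for all x ∈ F; (vii) [a1,a1] = [a2,a1] = a3 and [a2,a2] = σ·a3 for some σ ∈ F with σ ≠ 0 and x² + x + σ ≠ 0 for all x ∈ F; (viii) [a1,a1] = [a2,a1] = a3, [a1,a2] = τ·a3, [a2,a2] = σ·a3 for some τ, σ ∈ F with τ ≠ 0, σ ≠ 0 and x² + (τ+1)x + σ ≠ 0 for all x ∈ F. -/
open Module Polynomial

variable {F L : Type*} [Field F] [AddCommGroup L] [Module F L]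

/-!
Pick `a₁` with `c = [a₁, a₁] ≠ 0`. As `Leib(L) = F c` is central and contains every bracket, the
product is determined by the scalars `α, γ, δ` with `[a₁, a₂] = α c`, `[a₂, a₁] = γ c`,
`[a₂, a₂] = δ c`, for any `a₂` completing `a₁, c` to a basis. Replacing `a₂` by `s (a₂ + t a₁)`
turns `(α, γ, δ)` into `(s (α + t), s (γ + t), s² Q(t))` with `Q(x) = x² + (α + γ) x + δ`. If `Q`
has a root `t`, this kills `[a₂, a₂]` and `s` scales a mixed bracket to `c`; otherwise `t = 0`
and `s = γ⁻¹` (or `1` if `γ = 0`), and the rescaled `Q` is still without roots.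
-/

section Brackets

variable {β : L →ₗ[F] L →ₗ[F] L} {a₁ a₂ c : L} {α γ δ : F}

def leibTable (c : L) (α γ δ : F) : Fin 3 → Fin 3 → L :=
  ![![c, α • c, 0], ![γ • c, δ • c, 0], ![0, 0, 0]]

variable (β) in
def HasBrackets (a₁ a₂ c : L) (α γ δ : F) : Prop :=
  β a₁ a₁ = c ∧ β a₁ a₂ = α • c ∧ β a₂ a₁ = γ • c ∧ β a₂ a₂ = δ • c

lemma HasBrackets.add_smul (h : HasBrackets β a₁ a₂ c α γ δ) (t : F) :
    HasBrackets β a₁ (a₂ + t • a₁) c (α + t) (γ + t) (t ^ 2 + (α + γ) * t + δ) := by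
  obtain ⟨h₁₁, h₁₂, h₂₁, h₂₂⟩ := h
  refine ⟨h₁₁, ?_, ?_, ?_⟩ <;>
    simp only [map_add, map_smul, LinearMap.add_apply, LinearMap.smul_apply,
      h₁₁, h₁₂, h₂₁, h₂₂] <;> module

lemma HasBrackets.smul (h : HasBrackets β a₁ a₂ c α γ δ) (s : F) :
    HasBrackets β a₁ (s • a₂) c (s * α) (s * γ) (s ^ 2 * δ) := by
  obtain ⟨h₁₁, h₁₂, h₂₁, h₂₂⟩ := h
  refine ⟨h₁₁, ?_, ?_, ?_⟩ <;>
    simp only [map_smul, LinearMap.smul_apply, h₁₂, h₂₁, h₂₂] <;> module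

lemma mulTbl_leibTable (hc : c ∈ lzCenter β) (h : HasBrackets β a₁ a₂ c α γ δ) :
    MulTbl β ![a₁, a₂, c] (leibTable c α γ δ) := by
  obtain ⟨h₁₁, h₁₂, h₂₁, h₂₂⟩ := h
  intro i j
  fin_cases i <;> fin_cases j <;> simp [leibTable, h₁₁, h₁₂, h₂₁, h₂₂, (hc _).1, (hc _).2]

end Brackets

section LinearIndependent

variable {R M : Type*} [Ring R] [AddCommGroup M] [Module R M] {x y z : M}

lemma LinearIndependent.vec3_add_smul (h : LinearIndependent R ![x, y, z]) (t : R) :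
    LinearIndependent R ![x, y + t • x, z] := by
  convert (linearIndependent_add_smul_iff (c := ![0, t, 0]) (i := 0) rfl).mpr h using 1
  funext i; fin_cases i <;> simp

lemma LinearIndependent.vec3_smul (h : LinearIndependent R ![x, y, z]) {s : R} (hs : IsUnit s) :
    LinearIndependent R ![x, s • y, z] := by
  convert h.units_smul ![1, hs.unit, 1] using 1
  funext i; fin_cases i <;> simp

end LinearIndependent

lemma exists_linearIndependent_vec3 (hdim : 2 < finrank F L) {x z : L}
    (h : LinearIndependent F ![x, z]) : ∃ y, LinearIndependent F ![x, y, z] := by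
  obtain ⟨y, hy⟩ := exists_linearIndependent_snoc_of_lt_finrank h hdim
  have hperm : ![x, y, z] = Fin.snoc ![x, z] y ∘ Equiv.swap (1 : Fin 3) 2 := by
    funext i; fin_cases i <;> rfl
  exact ⟨y, hperm ▸ hy.comp _ (Equiv.injective _)⟩

section Kernel

variable {β : L →ₗ[F] L →ₗ[F] L}

lemma leibKer_eq_span_singleton (hk : finrank F (leibKer β) = 1) {a : L} (ha : β a a ≠ 0) :
    leibKer β = F ∙ β a a := by
  have : FiniteDimensional F (leibKer β) := Module.finite_of_finrank_eq_succ hk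
  refine (Submodule.eq_of_le_of_finrank_eq ?_ ?_).symm
  · exact (Submodule.span_singleton_le_iff_mem _ _).mpr (Submodule.subset_span ⟨a, rfl⟩)
  · rw [finrank_span_singleton ha, hk]

lemma linearIndependent_bracket_self {a : L} (ha : β a a ≠ 0) (hc : β a a ∈ lzCenter β) :
    LinearIndependent F ![a, β a a] := by
  rw [LinearIndependent.pair_iff]
  intro s t hst
  have hs : s • β a a = 0 := by
    simpa [(hc a).1] using congrArg (fun x => β x a) hst
  obtain rfl : s = 0 := (smul_eq_zero.mp hs).resolve_right ha
  obtain rfl : t = 0 := (smul_eq_zero.mp (by simpa using hst)).resolve_right ha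
  exact ⟨rfl, rfl⟩

lemma exists_hasBrackets (hdim : 2 < finrank F L) (hnotLie : ∃ a : L, β a a ≠ 0)
    (hsub : leibKer β ≤ lzCenter β) (hk : finrank F (leibKer β) = 1)
    (hab : ∀ a b : L, β a b ∈ leibKer β) :
    ∃ (a₁ a₂ c : L) (α γ δ : F), LinearIndependent F ![a₁, a₂, c] ∧ c ∈ lzCenter β ∧
      HasBrackets β a₁ a₂ c α γ δ := by
  obtain ⟨a₁, ha₁⟩ := hnotLie
  have hc : β a₁ a₁ ∈ lzCenter β := hsub (Submodule.subset_span ⟨a₁, rfl⟩)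
  have hmul (x y : L) : ∃ s : F, s • β a₁ a₁ = β x y := by
    simpa [leibKer_eq_span_singleton hk ha₁, Submodule.mem_span_singleton] using hab x y
  obtain ⟨a₂, hli⟩ := exists_linearIndependent_vec3 hdim (linearIndependent_bracket_self ha₁ hc)
  obtain ⟨α, h₁₂⟩ := hmul a₁ a₂
  obtain ⟨γ, h₂₁⟩ := hmul a₂ a₁
  obtain ⟨δ, h₂₂⟩ := hmul a₂ a₂
  exact ⟨a₁, a₂, _, α, γ, δ, hli, hc, rfl, h₁₂.symm, h₂₁.symm, h₂₂.symm⟩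

end Kernel

/-- The scalars `([a₁, a₂], [a₂, a₁], [a₂, a₂])` of the tables (i)–(viii), in this order. -/
def IsNormalForm (p q r : F) : Prop :=
  (p = 0 ∧ q = 0 ∧ r = 0) ∨ (p = 1 ∧ q = 0 ∧ r = 0) ∨ (p = 0 ∧ q = 1 ∧ r = 0) ∨
    (p ≠ 0 ∧ q = 1 ∧ r = 0) ∨
    (p = 0 ∧ q = 0 ∧ r ≠ 0 ∧ ∀ x, x ^ 2 + r ≠ 0) ∨
    (p ≠ 0 ∧ q = 0 ∧ r ≠ 0 ∧ ∀ x, x ^ 2 + p * x + r ≠ 0) ∨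
    (p = 0 ∧ q = 1 ∧ r ≠ 0 ∧ ∀ x, x ^ 2 + x + r ≠ 0) ∨
    (p ≠ 0 ∧ q = 1 ∧ r ≠ 0 ∧ ∀ x, x ^ 2 + (p + 1) * x + r ≠ 0)

lemma exists_isNormalForm_mul_mul_zero (p q : F) :
    ∃ s ≠ 0, IsNormalForm (s * p) (s * q) 0 := by
  unfold IsNormalForm
  by_cases hq : q = 0
  · by_cases hp : p = 0
    · exact ⟨1, one_ne_zero, by simp [hp, hq]⟩
    · exact ⟨p⁻¹, inv_ne_zero hp, by simp [hp, hq]⟩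
  · rcases eq_or_ne p 0 with hp | hp <;> exact ⟨q⁻¹, inv_ne_zero hq, by simp [hp, hq]⟩

lemma exists_isNormalForm_mul_mul_sq_mul {p q r : F} (hroot : ∀ x, x ^ 2 + (p + q) * x + r ≠ 0) :
    ∃ s ≠ 0, IsNormalForm (s * p) (s * q) (s ^ 2 * r) := by
  have hr : r ≠ 0 := by simpa using hroot 0
  unfold IsNormalForm
  by_cases hq : q = 0
  · subst hq
    rcases eq_or_ne p 0 with hp | hp <;> exact ⟨1, one_ne_zero, by simpa [hp, hr] using hroot⟩
  · have hroot' (x : F) : x ^ 2 + (q⁻¹ * p + 1) * x + q⁻¹ ^ 2 * r ≠ 0 := by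
      have hscale : x ^ 2 + (q⁻¹ * p + 1) * x + q⁻¹ ^ 2 * r =
          q⁻¹ ^ 2 * ((q * x) ^ 2 + (p + q) * (q * x) + r) := by
        field_simp
      rw [hscale]
      exact mul_ne_zero (by simpa using hq) (hroot _)
    rcases eq_or_ne p 0 with hp | hp <;>
      exact ⟨q⁻¹, inv_ne_zero hq, by simpa [hp, hq, hr] using hroot'⟩

lemma exists_isNormalForm (α γ δ : F) :
    ∃ t s : F, s ≠ 0 ∧
      IsNormalForm (s * (α + t)) (s * (γ + t)) (s ^ 2 * (t ^ 2 + (α + γ) * t + δ)) := by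
  by_cases hroot : ∃ t, t ^ 2 + (α + γ) * t + δ = 0
  · obtain ⟨t, ht⟩ := hroot
    obtain ⟨s, hs, hnf⟩ := exists_isNormalForm_mul_mul_zero (α + t) (γ + t)
    exact ⟨t, s, hs, by rwa [ht, mul_zero]⟩
  · push Not at hroot
    obtain ⟨s, hs, hnf⟩ := exists_isNormalForm_mul_mul_sq_mul hroot
    exact ⟨0, s, hs, by simpa using hnf⟩

lemma exists_hasBrackets_isNormalForm {β : L →ₗ[F] L →ₗ[F] L} (hdim : 2 < finrank F L)
    (hnotLie : ∃ a : L, β a a ≠ 0) (hsub : leibKer β ≤ lzCenter β)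
    (hk : finrank F (leibKer β) = 1) (hab : ∀ a b : L, β a b ∈ leibKer β) :
    ∃ (a₁ a₂ c : L) (p q r : F), LinearIndependent F ![a₁, a₂, c] ∧ c ∈ lzCenter β ∧
      HasBrackets β a₁ a₂ c p q r ∧ IsNormalForm p q r := by
  obtain ⟨a₁, a₂, c, α, γ, δ, hli, hc, hbr⟩ := exists_hasBrackets hdim hnotLie hsub hk hab
  obtain ⟨t, s, hs, hnf⟩ := exists_isNormalForm α γ δ
  exact ⟨a₁, s • (a₂ + t • a₁), c, _, _, _, (hli.vec3_add_smul t).vec3_smul hs.isUnit, hc,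
    (hbr.add_smul t).smul s, hnf⟩

theorem stmt1_general (β : L →ₗ[F] L →ₗ[F] L)
    (hdim : finrank F L = 3) (hnotLie : ∃ a : L, β a a ≠ 0)
    (hsub : leibKer β ≤ lzCenter β) (hk : finrank F (leibKer β) = 1)
    (hab : ∀ a b : L, β a b ∈ leibKer β) :
    ∃ b : Basis (Fin 3) F L,
      MulTbl β ⇑b ![![b 2, 0, 0], ![0, 0, 0], ![0, 0, 0]] ∨
      MulTbl β ⇑b ![![b 2, b 2, 0], ![0, 0, 0], ![0, 0, 0]] ∨
      MulTbl β ⇑b ![![b 2, 0, 0], ![b 2, 0, 0], ![0, 0, 0]] ∨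
      (∃ α : F, α ≠ 0 ∧ MulTbl β ⇑b ![![b 2, α • b 2, 0], ![b 2, 0, 0], ![0, 0, 0]]) ∨
      (∃ β' : F, β' ≠ 0 ∧ (∀ x : F, x ^ 2 + β' ≠ 0) ∧
        MulTbl β ⇑b ![![b 2, 0, 0], ![0, β' • b 2, 0], ![0, 0, 0]]) ∨
      (∃ α β' : F, α ≠ 0 ∧ β' ≠ 0 ∧ (∀ x : F, x ^ 2 + α * x + β' ≠ 0) ∧
        MulTbl β ⇑b ![![b 2, α • b 2, 0], ![0, β' • b 2, 0], ![0, 0, 0]]) ∨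
      (∃ σ : F, σ ≠ 0 ∧ (∀ x : F, x ^ 2 + x + σ ≠ 0) ∧
        MulTbl β ⇑b ![![b 2, 0, 0], ![b 2, σ • b 2, 0], ![0, 0, 0]]) ∨
      (∃ τ σ : F, τ ≠ 0 ∧ σ ≠ 0 ∧ (∀ x : F, x ^ 2 + (τ + 1) * x + σ ≠ 0) ∧
        MulTbl β ⇑b ![![b 2, τ • b 2, 0], ![b 2, σ • b 2, 0], ![0, 0, 0]]) := by
  obtain ⟨a₁, a₂, c, p, q, r, hli, hc, hbr, hnf⟩ :=
    exists_hasBrackets_isNormalForm (by omega) hnotLie hsub hk hab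
  let b := basisOfLinearIndependentOfCardEqFinrank hli (by simp [hdim])
  have hb : ⇑b = ![a₁, a₂, c] := coe_basisOfLinearIndependentOfCardEqFinrank _ _
  have htbl : MulTbl β b (leibTable (b 2) p q r) := by
    simpa [hb] using mulTbl_leibTable hc hbr
  refine ⟨b, ?_⟩
  rcases hnf with ⟨rfl, rfl, rfl⟩ | ⟨rfl, rfl, rfl⟩ | ⟨rfl, rfl, rfl⟩ | ⟨hp, rfl, rfl⟩ |
      ⟨rfl, rfl, hr, hroot⟩ | ⟨hp, rfl, hr, hroot⟩ | ⟨rfl, rfl, hr, hroot⟩ |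
      ⟨hp, rfl, hr, hroot⟩ <;>
    simp only [leibTable, zero_smul, one_smul] at htbl
  · exact Or.inl htbl
  · exact Or.inr <| Or.inl htbl
  · exact Or.inr <| Or.inr <| Or.inl htbl
  · exact Or.inr <| Or.inr <| Or.inr <| Or.inl ⟨p, hp, htbl⟩
  · exact Or.inr <| Or.inr <| Or.inr <| Or.inr <| Or.inl ⟨r, hr, hroot, htbl⟩
  · exact Or.inr <| Or.inr <| Or.inr <| Or.inr <| Or.inr <| Or.inl ⟨p, r, hp, hr, hroot, htbl⟩
  · exact Or.inr <| Or.inr <| Or.inr <| Or.inr <| Or.inr <| Or.inr <| Or.inl ⟨r, hr, hroot, htbl⟩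
  · exact Or.inr <| Or.inr <| Or.inr <| Or.inr <| Or.inr <| Or.inr <| Or.inr
      ⟨p, r, hp, hr, hroot, htbl⟩

theorem stmt1 (β : L →ₗ[F] L →ₗ[F] L) (hLeib : IsLeibniz β)
    (hdim : finrank F L = 3) (hnotLie : ∃ a : L, β a a ≠ 0)
    (hsub : leibKer β ≤ lzCenter β) (hk : finrank F (leibKer β) = 1)
    (hab : ∀ a b : L, β a b ∈ leibKer β) :
    ∃ b : Basis (Fin 3) F L,
      MulTbl β ⇑b ![![b 2, 0, 0], ![0, 0, 0], ![0, 0, 0]] ∨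
      MulTbl β ⇑b ![![b 2, b 2, 0], ![0, 0, 0], ![0, 0, 0]] ∨
      MulTbl β ⇑b ![![b 2, 0, 0], ![b 2, 0, 0], ![0, 0, 0]] ∨
      (∃ α : F, α ≠ 0 ∧ MulTbl β ⇑b ![![b 2, α • b 2, 0], ![b 2, 0, 0], ![0, 0, 0]]) ∨
      (∃ β' : F, β' ≠ 0 ∧ (∀ x : F, x ^ 2 + β' ≠ 0) ∧
        MulTbl β ⇑b ![![b 2, 0, 0], ![0, β' • b 2, 0], ![0, 0, 0]]) ∨
      (∃ α β' : F, α ≠ 0 ∧ β' ≠ 0 ∧ (∀ x : F, x ^ 2 + α * x + β' ≠ 0) ∧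
        MulTbl β ⇑b ![![b 2, α • b 2, 0], ![0, β' • b 2, 0], ![0, 0, 0]]) ∨
      (∃ σ : F, σ ≠ 0 ∧ (∀ x : F, x ^ 2 + x + σ ≠ 0) ∧
        MulTbl β ⇑b ![![b 2, 0, 0], ![b 2, σ • b 2, 0], ![0, 0, 0]]) ∨
      (∃ τ σ : F, τ ≠ 0 ∧ σ ≠ 0 ∧ (∀ x : F, x ^ 2 + (τ + 1) * x + σ ≠ 0) ∧
        MulTbl β ⇑b ![![b 2, τ • b 2, 0], ![b 2, σ • b 2, 0], ![0, 0, 0]]) :=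
  stmt1_general β hdim hnotLie hsub hk hab
end

section
/- Let F be a field and let L be a left Leibniz algebra over F with dim_F L = 3 which is not a Lie algebra. Assume Leib(L) ⊆ ζ(L), dim_F Leib(L) = 1, and L/Leib(L) is non-abelian (there exist a,b ∈ L with [a,b] ∉ Leib(L)). Then there exists a basis (a1, a2, a3) of L such that the bracket is given by one of the following multiplication tables (all brackets of basis vectors not listed being zero): (i) [a1,a1] = a3, [a1,a2] = −a1, [a2,a1] = a1; (ii) [a1,a1] = a3, [a1,a2] = −a1 − α·a3, [a2,a1] = a1 + α·a3 for some α ∈ F, α ≠ 0; (iii) [a1,a1] = a3, [a1,a2] = −a1, [a2,a1] = a1, [a2,a2] = γ·a3 for some γ ∈ F with γ ≠ 0 and x² + γ ≠ 0 for all x ∈ F; (iv) [a1,a1] = a3, [a1,a2] = −a1 − α·a3, [a2,a1] = a1 + α·a3, [a2,a2] = γ·a3 for some α, γ ∈ F with α ≠ 0, γ ≠ 0 and x² + γ ≠ 0 for all x ∈ F; (v) [a1,a1] = a3, [a1,a2] = a2, [a2,a1] = −a2; (vi) [a1,a1] = a3, [a1,a2] = a2 + α·a3, [a2,a1] = −a2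 − α·a3 for some α ∈ F, α ≠ 0. -/
/-!
Since `Leib(L) = F c` is central, `L / F c` is a non-abelian two-dimensional Lie algebra, so there are
`x ∉ F c` and `y` with `[x, y] = x + p c`; the Leibniz identity at `(x, y, y)` then forces
`[y, x] = -[x, y]`. Write `[x, x] = s c` and `[y, y] = t c`. If `s ≠ 0`, completing the square in `y`
makes `-t / s` zero or a non-square, and the basis `(x, -y, s c)` has table (i)–(iv). If `s = 0`, then
`t ≠ 0` because `L` is not Lie, and the basis `(-y, x, t c)` has table (v) or (vi).
-/

open Module Polynomial

variable {F L : Type*} [Field F] [AddCommGroup L] [Module F L]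

open Submodule

section Leibniz

variable {β : L →ₗ[F] L →ₗ[F] L}

lemma exists_ne_zero_eq_span_singleton_of_finrank_eq_one {S : Submodule F L}
    (h : finrank F S = 1) : ∃ c : L, c ≠ 0 ∧ S = F ∙ c := by
  obtain ⟨v, hv, -⟩ := finrank_eq_one_iff'.1 h
  have hv' : (v : L) ≠ 0 := by simpa using hv
  exact ⟨v, hv', eq_span_singleton_of_mem_of_finrank_eq_one h v.2 hv'⟩

lemma add_smul_notMem {K : Submodule F L} {x c : L} (hx : x ∉ K) (hc : c ∈ K) (p : F) :
    x + p • c ∉ K :=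
  fun h => hx ((Submodule.add_mem_iff_left K (smul_mem K p hc)).1 h)

lemma bracket_self_mem_leibKer (β : L →ₗ[F] L →ₗ[F] L) (u : L) : β u u ∈ leibKer β :=
  subset_span ⟨u, rfl⟩

lemma bracket_add_bracket_swap_mem_leibKer (β : L →ₗ[F] L →ₗ[F] L) (u v : L) :
    β u v + β v u ∈ leibKer β := by
  have h : β u v + β v u = β (u + v) (u + v) - β u u - β v v := by
    simp only [map_add, LinearMap.add_apply]
    abel
  rw [h]
  exact sub_mem (sub_mem (bracket_self_mem_leibKer β _) (bracket_self_mem_leibKer β _))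
    (bracket_self_mem_leibKer β _)

lemma linearIndependent_of_bracket_notMem {K : Submodule F L} {x y c : L}
    (hxx : β x x ∈ K) (hyy : β y y ∈ K) (hxy : β x y ∉ K) (hc : c ≠ 0)
    (hcent : c ∈ lzCenter β) : LinearIndependent F ![x, y, c] := by
  rw [Fintype.linearIndependent_iff]
  intro g hg
  simp only [Fin.sum_univ_three, Matrix.cons_val_zero, Matrix.cons_val_one,
    Matrix.cons_val_two, Matrix.head_cons, Matrix.tail_cons] at hg
  have hR : g 0 • β x y + g 1 • β y y = 0 := by
    simpa [(hcent y).1] using congrArg (β · y) hg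
  have hL : g 0 • β x x + g 1 • β x y = 0 := by
    simpa [(hcent x).2] using congrArg (β x) hg
  have h0 : g 0 = 0 := by
    by_contra h
    refine hxy ((smul_mem_iff K h).1 ?_)
    rw [eq_neg_of_add_eq_zero_left hR]
    exact neg_mem (smul_mem K _ hyy)
  have h1 : g 1 = 0 := by
    by_contra h
    refine hxy ((smul_mem_iff K h).1 ?_)
    rw [eq_neg_of_add_eq_zero_right hL]
    exact neg_mem (smul_mem K _ hxx)
  have h2 : g 2 = 0 := by simpa [h0, h1, hc] using hg
  intro i
  fin_cases i <;> assumption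

lemma bracket_swap_eq_neg (hLeib : IsLeibniz β) (hsub : leibKer β ≤ lzCenter β) {x y : L}
    (hxy : β x y - x ∈ leibKer β) : β y x = -β x y := by
  obtain ⟨z, hz, e⟩ : ∃ z ∈ leibKer β, β x y = x + z :=
    ⟨_, hxy, (add_sub_cancel _ _).symm⟩
  have h := hLeib x y y
  rw [(hsub (bracket_self_mem_leibKer β y) x).2] at h
  simp only [e, map_add, LinearMap.add_apply, (hsub hz y).1, (hsub hz y).2] at h ⊢
  linear_combination (norm := module) h

lemma exists_bracket_sub_self_mem (hdim : finrank F L = 3) (hsub : leibKer β ≤ lzCenter β)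
    {a b c : L} (hcK : c ∈ leibKer β) (hc : c ≠ 0) (hab : β a b ∉ leibKer β) :
    ∃ y, β (β a b) y - β a b ∈ leibKer β := by
  have hli := linearIndependent_of_bracket_notMem (bracket_self_mem_leibKer β a)
    (bracket_self_mem_leibKer β b) hab hc (hsub hcK)
  have hspan := hli.span_eq_top_of_card_eq_finrank (by simp [hdim])
  obtain ⟨g, hg⟩ := (mem_span_range_iff_exists_fun F).1 (hspan ▸ mem_top : β a b ∈ _)
  simp only [Fin.sum_univ_three, Matrix.cons_val_zero, Matrix.cons_val_one,
    Matrix.cons_val_two, Matrix.head_cons, Matrix.tail_cons] at hg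
  have hwb : β (β a b) b = g 0 • β a b + g 1 • β b b := by
    conv_lhs => rw [← hg]
    simp only [map_add, map_smul, LinearMap.add_apply, LinearMap.smul_apply, (hsub hcK b).1]
    module
  have hwa : β (β a b) a = g 0 • β a a + g 1 • β b a := by
    conv_lhs => rw [← hg]
    simp only [map_add, map_smul, LinearMap.add_apply, LinearMap.smul_apply, (hsub hcK a).1]
    module
  -- modulo `leibKer β`, `[w, b] ≡ g 0 • w` and `[w, a] ≡ -g 1 • w` for `w = [a, b]`
  by_cases h0 : g 0 = 0
  · have h1 : g 1 ≠ 0 := by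
      rintro h1
      refine hab ?_
      rw [← hg, h0, h1]
      simpa using smul_mem _ (g 2) hcK
    refine ⟨(-(g 1)⁻¹) • a, ?_⟩
    have : β (β a b) ((-(g 1)⁻¹) • a) - β a b
        = (-(g 1)⁻¹) • (g 0 • β a a + g 1 • (β b a + β a b)) := by
      rw [map_smul, hwa]
      match_scalars <;> field_simp
    rw [this]
    exact smul_mem _ _ (add_mem (smul_mem _ _ (bracket_self_mem_leibKer β a))
      (smul_mem _ _ (bracket_add_bracket_swap_mem_leibKer β b a)))
  · refine ⟨(g 0)⁻¹ • b, ?_⟩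
    have : β (β a b) ((g 0)⁻¹ • b) - β a b = (g 0)⁻¹ • g 1 • β b b := by
      rw [map_smul, hwb, smul_add, smul_smul, inv_mul_cancel₀ h0, one_smul, add_sub_cancel_left]
    rw [this]
    exact smul_mem _ _ (smul_mem _ _ (bracket_self_mem_leibKer β b))

lemma bracket_self_eq_zero_of_linearIndependent (hdim : finrank F L = 3) {x y c : L}
    (hli : LinearIndependent F ![x, y, c]) (hcent : c ∈ lzCenter β) (hxx : β x x = 0)
    (hyy : β y y = 0) (hyx : β y x = -β x y) (u : L) : β u u = 0 := by
  have hspan := hli.span_eq_top_of_card_eq_finrank (by simp [hdim])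
  obtain ⟨g, rfl⟩ := (mem_span_range_iff_exists_fun F).1 (hspan ▸ mem_top : u ∈ _)
  simp only [Fin.sum_univ_three, Matrix.cons_val_zero, Matrix.cons_val_one,
    Matrix.cons_val_two, Matrix.head_cons, Matrix.tail_cons, map_add, map_smul,
    LinearMap.add_apply, LinearMap.smul_apply, hxx, hyy, hyx, (hcent _).1, (hcent _).2]
  module

end Leibniz

section Tables

/-- Table (iv) of the classification; with `α = 0` or `γ = 0` allowed it also covers (i)–(iii). -/
def tableIV (α γ : F) (e : Fin 3 → L) : Fin 3 → Fin 3 → L :=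
  ![![e 2, -(e 0) - α • e 2, 0], ![e 0 + α • e 2, γ • e 2, 0], ![0, 0, 0]]

/-- Table (vi) of the classification; with `α = 0` allowed it also covers (v). -/
def tableVI (α : F) (e : Fin 3 → L) : Fin 3 → Fin 3 → L :=
  ![![e 2, e 1 + α • e 2, 0], ![-(e 1) - α • e 2, 0, 0], ![0, 0, 0]]

def HasNormalFormTable (β : L →ₗ[F] L →ₗ[F] L) (b : Fin 3 → L) : Prop :=
  MulTbl β b ![![b 2, -(b 0), 0], ![b 0, 0, 0], ![0, 0, 0]] ∨
  (∃ α : F, α ≠ 0 ∧ MulTbl β b ![![b 2, -(b 0) - α • b 2, 0], ![b 0 + α • b 2, 0, 0], ![0, 0, 0]]) ∨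
  (∃ γ : F, γ ≠ 0 ∧ (∀ x : F, x ^ 2 + γ ≠ 0) ∧
    MulTbl β b ![![b 2, -(b 0), 0], ![b 0, γ • b 2, 0], ![0, 0, 0]]) ∨
  (∃ α γ : F, α ≠ 0 ∧ γ ≠ 0 ∧ (∀ x : F, x ^ 2 + γ ≠ 0) ∧
    MulTbl β b ![![b 2, -(b 0) - α • b 2, 0], ![b 0 + α • b 2, γ • b 2, 0], ![0, 0, 0]]) ∨
  MulTbl β b ![![b 2, b 1, 0], ![-(b 1), 0, 0], ![0, 0, 0]] ∨
  (∃ α : F, α ≠ 0 ∧ MulTbl β b ![![b 2, b 1 + α • b 2, 0], ![-(b 1) - α • b 2, 0, 0], ![0, 0, 0]])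

variable {β : L →ₗ[F] L →ₗ[F] L} {e : Fin 3 → L}

lemma hasNormalFormTable_of_tableIV {α γ : F} (hγ : γ = 0 ∨ ∀ x : F, x ^ 2 + γ ≠ 0)
    (h : MulTbl β e (tableIV α γ e)) : HasNormalFormTable β e := by
  unfold HasNormalFormTable
  rcases eq_or_ne α 0 with rfl | hα <;> rcases hγ with rfl | hγ
  · left; simpa [tableIV] using h
  · have hγ0 : γ ≠ 0 := by simpa using hγ 0
    right; right; left; exact ⟨γ, hγ0, hγ, by simpa [tableIV] using h⟩
  · right; left; exact ⟨α, hα, by simpa [tableIV] using h⟩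
  · have hγ0 : γ ≠ 0 := by simpa using hγ 0
    right; right; right; left; exact ⟨α, γ, hα, hγ0, hγ, h⟩

lemma hasNormalFormTable_of_tableVI {α : F} (h : MulTbl β e (tableVI α e)) :
    HasNormalFormTable β e := by
  unfold HasNormalFormTable
  rcases eq_or_ne α 0 with rfl | hα
  · right; right; right; right; left; simpa [tableVI] using h
  · right; right; right; right; right; exact ⟨α, hα, h⟩

lemma mulTbl_of_mem_lzCenter {e₀ e₁ e₂ t₀₀ t₀₁ t₁₀ t₁₁ : L} (h₂ : e₂ ∈ lzCenter β)
    (h₀₀ : β e₀ e₀ = t₀₀) (h₀₁ : β e₀ e₁ = t₀₁) (h₁₀ : β e₁ e₀ = t₁₀) (h₁₁ : β e₁ e₁ = t₁₁) :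
    MulTbl β ![e₀, e₁, e₂] ![![t₀₀, t₀₁, 0], ![t₁₀, t₁₁, 0], ![0, 0, 0]] := by
  intro i j
  fin_cases i <;> fin_cases j <;> simp [*, (h₂ _).1, (h₂ _).2]

end Tables

section Classification

variable {β : L →ₗ[F] L →ₗ[F] L}

lemma mulTbl_tableIV (hsub : leibKer β ≤ lzCenter β) {x y c : L} {p s t : F}
    (hcK : c ∈ leibKer β) (hs : s ≠ 0) (hxx : β x x = s • c) (hyy : β y y = t • c)
    (hxy : β x y = x + p • c) (hyx : β y x = -β x y) :
    MulTbl β ![x, -y, s • c] (tableIV (p / s) (t / s) ![x, -y, s • c]) := by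
  have hα : (p / s) • s • c = p • c := by rw [smul_smul, div_mul_cancel₀ _ hs]
  have hγ : (t / s) • s • c = t • c := by rw [smul_smul, div_mul_cancel₀ _ hs]
  refine mulTbl_of_mem_lzCenter (hsub (smul_mem _ s hcK)) hxx ?_ ?_ ?_
  · change _ = -x - (p / s) • s • c
    rw [map_neg, hxy, hα, neg_add']
  · change _ = x + (p / s) • s • c
    rw [map_neg, LinearMap.neg_apply, hyx, neg_neg, hxy, hα]
  · change _ = (t / s) • s • c
    rw [map_neg, map_neg, LinearMap.neg_apply, neg_neg, hyy, hγ]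

lemma mulTbl_tableVI (hsub : leibKer β ≤ lzCenter β) {x y c : L} {p t : F}
    (hcK : c ∈ leibKer β) (ht : t ≠ 0) (hxx : β x x = 0) (hyy : β y y = t • c)
    (hxy : β x y = x + p • c) (hyx : β y x = -β x y) :
    MulTbl β ![-y, x, t • c] (tableVI (p / t) ![-y, x, t • c]) := by
  have hα : (p / t) • t • c = p • c := by rw [smul_smul, div_mul_cancel₀ _ ht]
  refine mulTbl_of_mem_lzCenter (hsub (smul_mem _ t hcK)) ?_ ?_ ?_ hxx
  · rw [map_neg, map_neg, LinearMap.neg_apply, neg_neg, hyy]; rfl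
  · change _ = x + (p / t) • t • c
    rw [map_neg, LinearMap.neg_apply, hyx, neg_neg, hxy, hα]
  · change _ = -x - (p / t) • t • c
    rw [map_neg, hxy, hα, neg_add']

lemma exists_basis_hasNormalFormTable_of_sq_eq_zero (hdim : finrank F L = 3)
    (hnotLie : ∃ a : L, β a a ≠ 0) (hsub : leibKer β ≤ lzCenter β) {x y c : L} {p t : F}
    (hx : x ∉ leibKer β) (hcK : c ∈ leibKer β) (hc : c ≠ 0) (hxx : β x x = 0)
    (hyy : β y y = t • c) (hxy : β x y = x + p • c) (hyx : β y x = -β x y) :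
    ∃ b : Basis (Fin 3) F L, HasNormalFormTable β b := by
  have ht : t ≠ 0 := by
    rintro rfl
    have hli : LinearIndependent F ![x, y, c] :=
      linearIndependent_of_bracket_notMem (bracket_self_mem_leibKer β _)
        (bracket_self_mem_leibKer β _) (hxy ▸ add_smul_notMem hx hcK p) hc (hsub hcK)
    obtain ⟨u, hu⟩ := hnotLie
    exact hu (bracket_self_eq_zero_of_linearIndependent hdim hli (hsub hcK) hxx
      (by rw [hyy, zero_smul]) hyx u)
  have hyx' : β (-y) x = x + p • c := by rw [map_neg, LinearMap.neg_apply, hyx, neg_neg, hxy]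
  have hli : LinearIndependent F ![-y, x, t • c] :=
    linearIndependent_of_bracket_notMem (bracket_self_mem_leibKer β _)
      (bracket_self_mem_leibKer β _) (hyx' ▸ add_smul_notMem hx hcK p)
      (smul_ne_zero ht hc) (hsub (smul_mem _ t hcK))
  refine ⟨basisOfLinearIndependentOfCardEqFinrank hli (by simp [hdim]), ?_⟩
  rw [coe_basisOfLinearIndependentOfCardEqFinrank]
  exact hasNormalFormTable_of_tableVI (mulTbl_tableVI hsub hcK ht hxx hyy hxy hyx)

/-- Completing the square: replacing `y` by `y + z • x` turns `[y, y] = t • c` into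
`(t + z ^ 2 * s) • c`. -/
lemma exists_bracket_self_eq_zero_or_nonsquare {x y c : L} {p s t : F} (hs : s ≠ 0)
    (hxx : β x x = s • c) (hyy : β y y = t • c) (hxy : β x y = x + p • c)
    (hyx : β y x = -β x y) :
    ∃ (y' : L) (p' t' : F), (t' / s = 0 ∨ ∀ z : F, z ^ 2 + t' / s ≠ 0) ∧
      β y' y' = t' • c ∧ β x y' = x + p' • c := by
  by_cases ht : ∀ z : F, z ^ 2 + t / s ≠ 0
  · exact ⟨y, p, t, .inr ht, hyy, hxy⟩
  obtain ⟨z, hz⟩ : ∃ z : F, z ^ 2 + t / s = 0 := by simpa using ht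
  refine ⟨y + z • x, p + z * s, 0, .inl (zero_div s), ?_, ?_⟩
  · have hts : t + z ^ 2 * s = 0 := by
      rw [show t = t / s * s by field_simp]
      linear_combination s * hz
    simp only [map_add, map_smul, LinearMap.add_apply, LinearMap.smul_apply, hxx, hyy, hyx]
    linear_combination (norm := module) hts • c
  · rw [map_add, map_smul, hxy, hxx]
    module

lemma exists_basis_hasNormalFormTable_of_sq_ne_zero (hLeib : IsLeibniz β)
    (hdim : finrank F L = 3) (hsub : leibKer β ≤ lzCenter β) {x y c : L} {p s t : F}
    (hx : x ∉ leibKer β) (hcK : c ∈ leibKer β) (hc : c ≠ 0) (hs : s ≠ 0)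
    (hxx : β x x = s • c) (hyy : β y y = t • c) (hxy : β x y = x + p • c)
    (hyx : β y x = -β x y) :
    ∃ b : Basis (Fin 3) F L, HasNormalFormTable β b := by
  obtain ⟨y, p, t, ht, hyy, hxy⟩ := exists_bracket_self_eq_zero_or_nonsquare hs hxx hyy hxy hyx
  have hyx : β y x = -β x y :=
    bracket_swap_eq_neg hLeib hsub (by rw [hxy, add_sub_cancel_left]; exact smul_mem _ _ hcK)
  have hxy' : β x (-y) = -(x + p • c) := by rw [map_neg, hxy]
  have hli : LinearIndependent F ![x, -y, s • c] :=
    linearIndependent_of_bracket_notMem (bracket_self_mem_leibKer β _)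
      (bracket_self_mem_leibKer β _)
      (hxy' ▸ fun h => add_smul_notMem hx hcK p (neg_mem_iff.1 h))
      (smul_ne_zero hs hc) (hsub (smul_mem _ s hcK))
  refine ⟨basisOfLinearIndependentOfCardEqFinrank hli (by simp [hdim]), ?_⟩
  rw [coe_basisOfLinearIndependentOfCardEqFinrank]
  exact hasNormalFormTable_of_tableIV ht (mulTbl_tableIV hsub hcK hs hxx hyy hxy hyx)

end Classification

theorem stmt2 (β : L →ₗ[F] L →ₗ[F] L) (hLeib : IsLeibniz β)
    (hdim : finrank F L = 3) (hnotLie : ∃ a : L, β a a ≠ 0)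
    (hsub : leibKer β ≤ lzCenter β) (hk : finrank F (leibKer β) = 1)
    (hnab : ∃ a b : L, β a b ∉ leibKer β) :
    ∃ b : Basis (Fin 3) F L,
      MulTbl β ⇑b ![![b 2, -(b 0), 0], ![b 0, 0, 0], ![0, 0, 0]] ∨
      (∃ α : F, α ≠ 0 ∧ MulTbl β ⇑b ![![b 2, -(b 0) - α • b 2, 0], ![b 0 + α • b 2, 0, 0], ![0, 0, 0]]) ∨
      (∃ γ : F, γ ≠ 0 ∧ (∀ x : F, x ^ 2 + γ ≠ 0) ∧
        MulTbl β ⇑b ![![b 2, -(b 0), 0], ![b 0, γ • b 2, 0], ![0, 0, 0]]) ∨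
      (∃ α γ : F, α ≠ 0 ∧ γ ≠ 0 ∧ (∀ x : F, x ^ 2 + γ ≠ 0) ∧
        MulTbl β ⇑b ![![b 2, -(b 0) - α • b 2, 0], ![b 0 + α • b 2, γ • b 2, 0], ![0, 0, 0]]) ∨
      MulTbl β ⇑b ![![b 2, b 1, 0], ![-(b 1), 0, 0], ![0, 0, 0]] ∨
      (∃ α : F, α ≠ 0 ∧ MulTbl β ⇑b ![![b 2, b 1 + α • b 2, 0], ![-(b 1) - α • b 2, 0, 0], ![0, 0, 0]]) := by
  obtain ⟨c, hc, hK⟩ := exists_ne_zero_eq_span_singleton_of_finrank_eq_one hk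
  have hcK : c ∈ leibKer β := hK ▸ mem_span_singleton_self c
  have hcoeff : ∀ v ∈ leibKer β, ∃ r : F, v = r • c := fun v hv =>
    (mem_span_singleton.1 (hK ▸ hv)).imp fun _ => Eq.symm
  obtain ⟨a, b, hx⟩ := hnab
  obtain ⟨y, hxy⟩ := exists_bracket_sub_self_mem hdim hsub hcK hc hx
  have hyx := bracket_swap_eq_neg hLeib hsub hxy
  generalize β a b = x at hx hxy hyx
  obtain ⟨p, hp⟩ := hcoeff _ hxy
  rw [sub_eq_iff_eq_add'] at hp
  obtain ⟨s, hxx⟩ := hcoeff _ (bracket_self_mem_leibKer β x)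
  obtain ⟨t, hyy⟩ := hcoeff _ (bracket_self_mem_leibKer β y)
  by_cases hs : s = 0
  · rw [hs, zero_smul] at hxx
    exact exists_basis_hasNormalFormTable_of_sq_eq_zero hdim hnotLie hsub hx hcK hc hxx hyy hp hyx
  · exact exists_basis_hasNormalFormTable_of_sq_ne_zero hLeib hdim hsub hx hcK hc hs hxx hyy hp hyx
end

section
/- Let F be a field and let L be a left Leibniz algebra over F with dim_F L = 3 which is not a Lie algebra. Assume Leib(L) ⊄ ζ(L), dim_F Leib(L) = 1, and L/Leib(L) is abelian. Then there exists a basis (a1, a2, a3) of L such that the bracket is given by one of the following multiplication tables (all brackets of basis vectors not listed being zero): (i) [a1,a1] = [a1,a3] = a3; (ii) [a1,a1] = [a1,a2] = [a1,a3] = a3; (iii) [a1,a1] = [a1,a3] = [a2,a1] = [a2,a3] = a3; (iv) [a1,a1] = [a1,a3] = a3 and [a2,a2] = σ·a3 for some σ ∈ F, σ ≠ 0, and for all α, β, γ ∈ F with β ≠ 0 one has α² + αγ + β²σ ≠ 0; (v) [a1,a1] = [a1,a2] = [a1,a3] = a3 and [a2,a2] = τ·a3 for some τ ∈ F, τ ≠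 0, and for all α, β, γ ∈ F with β ≠ 0 one has α² + αβ + αγ + β²τ ≠ 0; (vi) [a1,a1] = [a1,a3] = [a2,a1] = [a2,a3] = a3 and [a2,a2] = τ·a3 for some τ ∈ F, τ ≠ 0, and for all α, β, γ ∈ F with β ≠ 0 one has α² + αγ + αβ + β²τ + βγ ≠ 0; (vii) [a1,a1] = [a1,a3] = [a2,a1] = [a2,a3] = a3, [a1,a2] = δ·a3, [a2,a2] = τ·a3 for some δ, τ ∈ F with δ ≠ 0, τ ≠ 0, and for all α, β, γ ∈ F with β ≠ 0 one has α² + αβδ + αγ + αβ + β²τ + βγ ≠ 0. -/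
open Module Polynomial

variable {F L : Type*} [Field F] [AddCommGroup L] [Module F L]

/-!
Squares annihilate from the left, hence so does all of `Leib(L) = F c ⊇ [L,L]`, and the Leibniz
identity then says that left multiplications commute. Writing `[x,y] = B(x,y) c` and comparing
`[x,[e,z]] = [e,[x,z]]` for some `e` with `[e,c] ≠ 0` shows that `B(x,y) = Φ(x) Ψ(y)` has rank one,
with `Φ(c) = 0` and `Ψ(c) = 1`. For `a₁` with `Φ(a₁) = 1`, `a₃ = Ψ(a₁) c` and `0 ≠ a₂ ∈ ker Φ ∩ ker Ψ`
the bracket has table (i), whatever `L` is.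
-/

theorem LinearMap.exists_eq_smul_of_mem_span_singleton {M N : Type*} [AddCommGroup M]
    [Module F M] [AddCommGroup N] [Module F N] (β : M →ₗ[F] N →ₗ[F] L) {c : L} (hc : c ≠ 0)
    (hβ : ∀ x y, β x y ∈ F ∙ c) : ∃ B : M →ₗ[F] N →ₗ[F] F, ∀ x y, β x y = B x y • c := by
  obtain ⟨π, hπ⟩ := Projective.exists_dual_eq_one F hc
  refine ⟨β.compr₂ π, fun x y => ?_⟩
  obtain ⟨t, ht⟩ := Submodule.mem_span_singleton.mp (hβ x y)
  rw [LinearMap.compr₂_apply, ← ht, map_smul, hπ, smul_eq_mul, mul_one]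

theorem linearIndependent_three_of_dual {Φ Ψ : Dual F L} {v₁ v₂ v₃ : L} (h₁ : Φ v₁ ≠ 0)
    (h₂ : Φ v₂ = 0) (h₃ : Φ v₃ = 0) (hΨ₂ : Ψ v₂ = 0) (hΨ₃ : Ψ v₃ ≠ 0) (hv₂ : v₂ ≠ 0) :
    LinearIndependent F ![v₁, v₂, v₃] := by
  rw [Fintype.linearIndependent_iff]
  intro t ht
  simp only [Fin.sum_univ_three, Matrix.cons_val_zero, Matrix.cons_val_one,
    Matrix.cons_val_two, Matrix.head_cons, Matrix.tail_cons] at ht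
  have ht₁ : t 0 = 0 := by
    simpa [h₁, h₂, h₃] using congrArg Φ ht
  have ht₃ : t 2 = 0 := by
    simpa [ht₁, hΨ₂, hΨ₃] using congrArg Ψ ht
  have ht₂ : t 1 = 0 := by
    simpa [ht₁, ht₃, hv₂] using ht
  intro i
  fin_cases i <;> assumption

namespace IsLeibniz

variable {β : L →ₗ[F] L →ₗ[F] L}

theorem apply_self_apply (hβ : IsLeibniz β) (a z : L) : β (β a a) z = 0 := by
  rw [hβ, sub_self]

theorem apply_eq_zero_of_mem_leibKer (hβ : IsLeibniz β) {x : L} (hx : x ∈ leibKer β) :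
    β x = 0 := by
  suffices leibKer β ≤ LinearMap.ker β from this hx
  rw [leibKer, Submodule.span_le]
  rintro _ ⟨a, rfl⟩
  exact LinearMap.ext (hβ.apply_self_apply a)

theorem apply_apply_comm (hβ : IsLeibniz β) (hab : ∀ a b : L, β a b ∈ leibKer β) (x y z : L) :
    β x (β y z) = β y (β x z) := by
  have h := hβ x y z
  rw [hβ.apply_eq_zero_of_mem_leibKer (hab x y), LinearMap.zero_apply, eq_comm, sub_eq_zero] at h
  exact h

theorem exists_apply_ne_zero_of_notMem_lzCenter (hβ : IsLeibniz β) {c : L}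
    (hc : c ∈ leibKer β) (hcζ : c ∉ lzCenter β) : ∃ e : L, β e c ≠ 0 := by
  by_contra! h
  exact hcζ fun y => ⟨by rw [hβ.apply_eq_zero_of_mem_leibKer hc, LinearMap.zero_apply], h y⟩

theorem exists_dual_bracket_eq_mul_smul (hβ : IsLeibniz β) (hab : ∀ a b : L, β a b ∈ leibKer β)
    {B : L →ₗ[F] L →ₗ[F] F} {c e : L} (hB : ∀ x y, β x y = B x y • c) (hc : c ∈ leibKer β)
    (he : β e c ≠ 0) :
    ∃ Φ Ψ : Dual F L, Φ c = 0 ∧ Ψ c = 1 ∧ ∀ x y, β x y = (Φ x * Ψ y) • c := by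
  have hc0 : c ≠ 0 := by rintro rfl; exact he (map_zero _)
  have hBe : B e c ≠ 0 := fun h => he (by rw [hB, h, zero_smul])
  -- Compare both sides of `[x,[e,z]] = [e,[x,z]]` as multiples of `c`.
  have hcomm (x z : L) : B x z * B e c = B e z * B x c := by
    refine smul_left_injective F hc0 ?_
    have h := hβ.apply_apply_comm hab x e z
    rw [hB e z, hB x z, map_smul, map_smul, hB x c, hB e c, smul_smul, smul_smul] at h
    exact h.symm
  refine ⟨B.flip c, (B e c)⁻¹ • B e, ?_, inv_mul_cancel₀ hBe, fun x y => ?_⟩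
  · refine smul_left_injective F hc0 ?_
    simp only [LinearMap.flip_apply, ← hB, hβ.apply_eq_zero_of_mem_leibKer hc,
      LinearMap.zero_apply, zero_smul]
  · rw [hB, LinearMap.flip_apply, LinearMap.smul_apply, smul_eq_mul]
    congr 1
    field_simp
    linear_combination hcomm x y

end IsLeibniz

theorem exists_basis_mulTbl_of_bracket_eq_mul_smul (hdim : finrank F L = 3)
    {β : L →ₗ[F] L →ₗ[F] L} {Φ Ψ : Dual F L} {c a : L} (hΦc : Φ c = 0) (hΨc : Ψ c = 1)
    (hβ : ∀ x y, β x y = (Φ x * Ψ y) • c) (ha : Φ a * Ψ a ≠ 0) :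
    ∃ b : Basis (Fin 3) F L, MulTbl β ⇑b ![![b 2, 0, b 2], ![0, 0, 0], ![0, 0, 0]] := by
  have : FiniteDimensional F L := .of_finrank_pos (by omega)
  set a₁ := (Φ a)⁻¹ • a
  set a₃ := Ψ a₁ • c
  have hΦ₁ : Φ a₁ = 1 := by simp [a₁, left_ne_zero_of_mul ha]
  have hΨ₁ : Ψ a₁ ≠ 0 := by simp [a₁, left_ne_zero_of_mul ha, right_ne_zero_of_mul ha]
  have hΦ₃ : Φ a₃ = 0 := by simp [a₃, hΦc]
  have hΨ₃ : Ψ a₃ = Ψ a₁ := by simp [a₃, hΨc]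
  obtain ⟨a₂, ha₂, ha₂0⟩ := (Submodule.ne_bot_iff _).mp
    (LinearMap.ker_ne_bot_of_finrank_lt (f := Φ.prod Ψ) (by simp [hdim]))
  rw [LinearMap.mem_ker, LinearMap.prod_apply, Function.prod, Prod.mk_eq_zero] at ha₂
  obtain ⟨hΦ₂, hΨ₂⟩ := ha₂
  have hli := linearIndependent_three_of_dual (hΦ₁ ▸ one_ne_zero) hΦ₂ hΦ₃ hΨ₂
    (hΨ₃ ▸ hΨ₁) ha₂0
  have hcard : Fintype.card (Fin 3) = finrank F L := by simp [hdim]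
  refine ⟨basisOfLinearIndependentOfCardEqFinrank hli hcard, ?_⟩
  rw [coe_basisOfLinearIndependentOfCardEqFinrank]
  have h₁₁ : β a₁ a₁ = a₃ := by rw [hβ, hΦ₁, one_mul]
  have h₁₂ : β a₁ a₂ = 0 := by rw [hβ, hΨ₂, mul_zero, zero_smul]
  have h₁₃ : β a₁ a₃ = a₃ := by rw [hβ, hΦ₁, hΨ₃, one_mul]
  have h₂ (z : L) : β a₂ z = 0 := by rw [hβ, hΦ₂, zero_mul, zero_smul]
  have h₃ (z : L) : β a₃ z = 0 := by rw [hβ, hΦ₃, zero_mul, zero_smul]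
  intro i j
  fin_cases i <;> fin_cases j <;> simp [h₁₁, h₁₂, h₁₃, h₂, h₃]

theorem stmt3 (β : L →ₗ[F] L →ₗ[F] L) (hLeib : IsLeibniz β)
    (hdim : finrank F L = 3) (hnotLie : ∃ a : L, β a a ≠ 0)
    (hnsub : ¬ leibKer β ≤ lzCenter β) (hk : finrank F (leibKer β) = 1)
    (hab : ∀ a b : L, β a b ∈ leibKer β) :
    ∃ b : Basis (Fin 3) F L,
      MulTbl β ⇑b ![![b 2, 0, b 2], ![0, 0, 0], ![0, 0, 0]] ∨
      MulTbl β ⇑b ![![b 2, b 2, b 2], ![0, 0, 0], ![0, 0, 0]] ∨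
      MulTbl β ⇑b ![![b 2, 0, b 2], ![b 2, 0, b 2], ![0, 0, 0]] ∨
      (∃ σ : F, σ ≠ 0 ∧ (∀ α β' γ : F, β' ≠ 0 → α ^ 2 + α * γ + β' ^ 2 * σ ≠ 0) ∧
        MulTbl β ⇑b ![![b 2, 0, b 2], ![0, σ • b 2, 0], ![0, 0, 0]]) ∨
      (∃ τ : F, τ ≠ 0 ∧ (∀ α β' γ : F, β' ≠ 0 → α ^ 2 + α * β' + α * γ + β' ^ 2 * τ ≠ 0) ∧
        MulTbl β ⇑b ![![b 2, b 2, b 2], ![0, τ • b 2, 0], ![0, 0, 0]]) ∨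
      (∃ τ : F, τ ≠ 0 ∧ (∀ α β' γ : F, β' ≠ 0 → α ^ 2 + α * γ + α * β' + β' ^ 2 * τ + β' * γ ≠ 0) ∧
        MulTbl β ⇑b ![![b 2, 0, b 2], ![b 2, τ • b 2, b 2], ![0, 0, 0]]) ∨
      (∃ δ τ : F, δ ≠ 0 ∧ τ ≠ 0 ∧ (∀ α β' γ : F, β' ≠ 0 → α ^ 2 + α * β' * δ + α * γ + α * β' + β' ^ 2 * τ + β' * γ ≠ 0) ∧
        MulTbl β ⇑b ![![b 2, δ • b 2, b 2], ![b 2, τ • b 2, b 2], ![0, 0, 0]]) := by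
  obtain ⟨a, ha⟩ := hnotLie
  have hc : β a a ∈ leibKer β := Submodule.subset_span ⟨a, rfl⟩
  have : FiniteDimensional F (leibKer β) := .of_finrank_pos (by omega)
  have hspan : F ∙ β a a = leibKer β := Submodule.eq_of_le_of_finrank_eq
    ((Submodule.span_singleton_le_iff_mem _ _).mpr hc) (by rw [hk, finrank_span_singleton ha])
  obtain ⟨B, hB⟩ := LinearMap.exists_eq_smul_of_mem_span_singleton β ha (hspan ▸ hab)
  rw [← hspan, Submodule.span_singleton_le_iff_mem] at hnsub
  obtain ⟨e, he⟩ := hLeib.exists_apply_ne_zero_of_notMem_lzCenter hc hnsub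
  obtain ⟨Φ, Ψ, hΦc, hΨc, hβ⟩ := hLeib.exists_dual_bracket_eq_mul_smul hab hB hc he
  have hΦΨa : Φ a * Ψ a ≠ 0 := fun h => ha (by rw [hβ, h, zero_smul])
  obtain ⟨b, hb⟩ := exists_basis_mulTbl_of_bracket_eq_mul_smul hdim hΦc hΨc hβ hΦΨa
  exact ⟨b, Or.inl hb⟩
end

section
/- Let F be a field and let L be a nilpotent left Leibniz algebra over F with dim_F L = 3 which is not a Lie algebra. Assume dim_F Leib(L) = 2. Then there exists a basis (a1, a2, a3) of L with a2 = [a1,a1], a3 = [a1,a2], and all other brackets of basis vectors equal to zero (in particular [a1,a3] = [a2,a1] = [a2,a2] = [a2,a3] = [a3,a1] = [a3,a2] = [a3,a3] = 0); moreover Leib(L) = [L,L] = F·a2 ⊕ F·a3, ζ(L) = F·a3, and L has nilpotency class exactly 3. -/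
open Module Polynomial

variable {F L : Type*} [Field F] [AddCommGroup L] [Module F L]

lemma leibKer_apply_eq_zero (β : L →ₗ[F] L →ₗ[F] L) (hLeib : IsLeibniz β)
    {s : L} (hs : s ∈ leibKer β) (x : L) : β s x = 0 := by
  induction hs using Submodule.span_induction with
  | mem s hs => obtain ⟨a, rfl⟩ := hs; rw [hLeib a a x, sub_self]
  | zero => simp
  | add a b _ _ ha hb => rw [map_add, LinearMap.add_apply, ha, hb, add_zero]
  | smul c a _ ha => rw [map_smul, LinearMap.smul_apply, ha, smul_zero]

lemma leibGamma_def (β : L →ₗ[F] L →ₗ[F] L) (m : ℕ) :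
    leibGamma β (m+2) = Submodule.span F {x | ∃ a b : L, b ∈ leibGamma β (m+1) ∧ β a b = x} := rfl

lemma leibGamma_succ_le (β : L →ₗ[F] L →ₗ[F] L) : ∀ n, leibGamma β (n+2) ≤ leibGamma β (n+1) := by
  intro n
  induction n with
  | zero => exact le_top
  | succ n ih =>
    rw [leibGamma_def, leibGamma_def]
    apply Submodule.span_mono
    rintro x ⟨a, b, hb, rfl⟩
    exact ⟨a, b, ih hb, rfl⟩

lemma leibGamma_antitone (β : L →ₗ[F] L →ₗ[F] L) : ∀ m n, n ≤ m → leibGamma β m ≤ leibGamma β n := by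
  intro m
  induction m with
  | zero => intro n h; interval_cases n; exact le_refl _
  | succ m ih =>
    intro n h
    rcases Nat.lt_or_ge n (m+1) with h' | h'
    · have hle : leibGamma β (m+1) ≤ leibGamma β m := by
        cases m with
        | zero => exact le_top
        | succ k => exact leibGamma_succ_le β k
      exact le_trans hle (ih n (by omega))
    · have : n = m+1 := by omega
      subst this; exact le_refl _

lemma leibGamma_stab (β : L →ₗ[F] L →ₗ[F] L) (n : ℕ)
    (h : leibGamma β (n+2) = leibGamma β (n+1)) :
    ∀ m, leibGamma β (n+1+m) = leibGamma β (n+1) := by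
  intro m
  induction m with
  | zero => rfl
  | succ m ih =>
    rw [show n+1+(m+1) = (n+m)+2 from by omega, leibGamma_def,
      show n+m+1 = n+1+m from by omega, ih, ← leibGamma_def, h]

lemma leibGamma_strict (β : L →ₗ[F] L →ₗ[F] L) (hnil : ∃ k : ℕ, leibGamma β k = ⊥)
    (n : ℕ) (hne : leibGamma β (n+1) ≠ ⊥) : leibGamma β (n+2) ≠ leibGamma β (n+1) := by
  intro h
  obtain ⟨k, hkbot⟩ := hnil
  have h1 := leibGamma_stab β n h k
  have h2 : leibGamma β (n+1+k) ≤ leibGamma β k := leibGamma_antitone β _ _ (by omega)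
  rw [h1, hkbot] at h2
  exact hne (le_bot_iff.mp h2)

theorem stmt5 (β : L →ₗ[F] L →ₗ[F] L) (hLeib : IsLeibniz β)
    (hdim : finrank F L = 3) (hnotLie : ∃ a : L, β a a ≠ 0)
    (hnil : ∃ k : ℕ, leibGamma β k = ⊥)
    (hk : finrank F (leibKer β) = 2) :
    ∃ b : Basis (Fin 3) F L,
      MulTbl β ⇑b ![![b 1, b 2, 0], ![0, 0, 0], ![0, 0, 0]] ∧
      leibKer β = Submodule.span F {b 1, b 2} ∧
      leibDerived β = Submodule.span F {b 1, b 2} ∧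
      lzCenter β = Submodule.span F {b 2} ∧
      leibGamma β 4 = ⊥ ∧ leibGamma β 3 ≠ ⊥ := by
  have hfd : FiniteDimensional F L := FiniteDimensional.of_finrank_pos (by omega)
  have hsq : ∀ s ∈ leibKer β, ∀ x : L, β s x = 0 := fun s hs x =>
    leibKer_apply_eq_zero β hLeib hs x
  have hmem2 : ∀ a b : L, β a b ∈ leibGamma β 2 := fun a b =>
    Submodule.subset_span ⟨a, b, Submodule.mem_top, rfl⟩
  have hmem3 : ∀ (a : L) {b : L}, b ∈ leibGamma β 2 → β a b ∈ leibGamma β 3 :=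
    fun a b hb => Submodule.subset_span ⟨a, _, hb, rfl⟩
  have hmem4 : ∀ (a : L) {b : L}, b ∈ leibGamma β 3 → β a b ∈ leibGamma β 4 :=
    fun a b hb => Submodule.subset_span ⟨a, _, hb, rfl⟩
  -- γ₂ ≠ ⊤
  have h1top : leibGamma β 1 = (⊤ : Submodule F L) := rfl
  have htopne : leibGamma β 1 ≠ ⊥ := by
    rw [h1top]
    intro h
    have := finrank_top F L
    rw [h, finrank_bot, hdim] at this
    omega
  have h21 : leibGamma β 2 ≠ ⊤ := by
    have := leibGamma_strict β hnil 0 htopne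
    rwa [h1top] at this
  have hKle2 : leibKer β ≤ leibGamma β 2 := by
    apply Submodule.span_le.mpr
    rintro x ⟨a, rfl⟩
    exact hmem2 a a
  have hfr2le : finrank F (leibGamma β 2) ≤ 2 := by
    have hlt : leibGamma β 2 < ⊤ := lt_top_iff_ne_top.mpr h21
    have := Submodule.finrank_lt_finrank_of_lt hlt
    rw [finrank_top, hdim] at this
    omega
  have h2K : leibKer β = leibGamma β 2 :=
    Submodule.eq_of_le_of_finrank_le hKle2 (by rw [hk]; exact hfr2le)
  have hfr2 : finrank F (leibGamma β 2) = 2 := by rw [← h2K, hk]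
  -- choose a ∉ γ₂
  obtain ⟨a, hanot⟩ : ∃ a : L, a ∉ leibGamma β 2 := by
    by_contra h
    push_neg at h
    exact h21 (eq_top_iff.mpr fun x _ => h x)
  have hane : a ≠ 0 := fun h => hanot (h ▸ Submodule.zero_mem _)
  have hinf : Submodule.span F {a} ⊓ leibGamma β 2 = ⊥ := by
    rw [eq_bot_iff]
    rintro x hx
    rw [Submodule.mem_inf] at hx
    obtain ⟨c, rfl⟩ := Submodule.mem_span_singleton.mp hx.1
    rcases eq_or_ne c 0 with rfl | hc
    · simp
    · exfalso
      apply hanot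
      have := Submodule.smul_mem (leibGamma β 2) c⁻¹ hx.2
      rwa [smul_smul, inv_mul_cancel₀ hc, one_smul] at this
  have hsup : Submodule.span F {a} ⊔ leibGamma β 2 = ⊤ := by
    apply Submodule.eq_top_of_finrank_eq
    have h1 := Submodule.finrank_sup_add_finrank_inf_eq (Submodule.span F {a}) (leibGamma β 2)
    rw [hinf, finrank_bot, finrank_span_singleton hane, hfr2] at h1
    omega
  have hdecomp : ∀ x : L, ∃ c : F, ∃ s ∈ leibGamma β 2, x = c • a + s := by
    intro x
    have hx : x ∈ Submodule.span F {a} ⊔ leibGamma β 2 := hsup ▸ Submodule.mem_top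
    obtain ⟨y, hy, z, hz, rfl⟩ := Submodule.mem_sup.mp hx
    obtain ⟨c, rfl⟩ := Submodule.mem_span_singleton.mp hy
    exact ⟨c, z, hz, rfl⟩
  -- γ₃ ≠ ⊥
  have h3ne : leibGamma β 3 ≠ ⊥ := by
    intro h3
    have hz : ∀ (x z : L), z ∈ leibGamma β 2 → β x z = 0 := by
      intro x z hzm
      have := hmem3 x hzm
      rw [h3] at this
      simpa using this
    have hKle : leibKer β ≤ Submodule.span F {β a a} := by
      apply Submodule.span_le.mpr
      rintro x ⟨y, rfl⟩
      obtain ⟨c, s, hs, rfl⟩ := hdecomp y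
      have hs0 : ∀ x : L, β s x = 0 := hsq s (by rw [h2K]; exact hs)
      show β (c • a + s) (c • a + s) ∈ Submodule.span F {β a a}
      have heq : β (c • a + s) (c • a + s) = (c * c) • β a a := by
        simp [map_add, map_smul, hs0, hz a s hs, smul_smul]
      rw [heq]
      exact Submodule.smul_mem _ _ (Submodule.mem_span_singleton_self _)
    have h1 := Submodule.finrank_mono hKle
    rw [hk] at h1
    rcases eq_or_ne (β a a) 0 with h0 | h0
    · rw [h0, Submodule.span_zero_singleton] at h1
      rw [finrank_bot] at h1
      omega
    · rw [finrank_span_singleton h0] at h1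
      omega
  have h2ne : leibGamma β 2 ≠ ⊥ := by
    intro h
    rw [h, finrank_bot] at hfr2
    omega
  have h32 : leibGamma β 3 < leibGamma β 2 :=
    lt_of_le_of_ne (leibGamma_succ_le β 1) (leibGamma_strict β hnil 1 h2ne)
  have hfr3 : finrank F (leibGamma β 3) = 1 := by
    have h1 := Submodule.finrank_lt_finrank_of_lt h32
    have h2 : finrank F (leibGamma β 3) ≠ 0 := fun h => h3ne (Submodule.finrank_eq_zero.mp h)
    omega
  have h43 : leibGamma β 4 < leibGamma β 3 :=
    lt_of_le_of_ne (leibGamma_succ_le β 2) (leibGamma_strict β hnil 2 h3ne)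
  have h4bot : leibGamma β 4 = ⊥ := by
    apply Submodule.finrank_eq_zero.mp
    have := Submodule.finrank_lt_finrank_of_lt h43
    omega
  -- the elements a2, a3
  set a2 : L := β a a with ha2def
  have ha2mem : a2 ∈ leibGamma β 2 := hmem2 a a
  have ha2K : a2 ∈ leibKer β := Submodule.subset_span ⟨a, rfl⟩
  have ha2n3 : a2 ∉ leibGamma β 3 := by
    intro hmem
    have hKle : leibKer β ≤ leibGamma β 3 := by
      apply Submodule.span_le.mpr
      rintro x ⟨y, rfl⟩
      obtain ⟨c, s, hs, rfl⟩ := hdecomp y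
      have hs0 : ∀ x : L, β s x = 0 := hsq s (by rw [h2K]; exact hs)
      show β (c • a + s) (c • a + s) ∈ leibGamma β 3
      have hexp : β (c • a + s) (c • a + s) = (c * c) • a2 + c • β a s := by
        simp [ha2def, map_add, map_smul, hs0, smul_smul, smul_add]
      rw [hexp]
      exact Submodule.add_mem _ (Submodule.smul_mem _ _ hmem)
        (Submodule.smul_mem _ _ (hmem3 a hs))
    have h1 := Submodule.finrank_mono hKle
    rw [hk, hfr3] at h1
    omega
  have ha2ne : a2 ≠ 0 := fun h => ha2n3 (h ▸ Submodule.zero_mem _)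
  set a3 : L := β a a2 with ha3def
  have ha3mem : a3 ∈ leibGamma β 3 := hmem3 a ha2mem
  have hg4z : ∀ (x z : L), z ∈ leibGamma β 3 → β x z = 0 := by
    intro x z hz
    have := hmem4 x hz
    rw [h4bot] at this
    simpa using this
  have hba3 : β a a3 = 0 := hg4z a a3 ha3mem
  -- γ₂ = span{a2} ⊔ γ₃
  have hinf23 : Submodule.span F {a2} ⊓ leibGamma β 3 = ⊥ := by
    rw [eq_bot_iff]
    rintro x hx
    rw [Submodule.mem_inf] at hx
    obtain ⟨c, rfl⟩ := Submodule.mem_span_singleton.mp hx.1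
    rcases eq_or_ne c 0 with rfl | hc
    · simp
    · exfalso
      apply ha2n3
      have := Submodule.smul_mem (leibGamma β 3) c⁻¹ hx.2
      rwa [smul_smul, inv_mul_cancel₀ hc, one_smul] at this
  have hG2 : Submodule.span F {a2} ⊔ leibGamma β 3 = leibGamma β 2 := by
    apply Submodule.eq_of_le_of_finrank_le
    · exact sup_le (Submodule.span_le.mpr (Set.singleton_subset_iff.mpr ha2mem)) h32.le
    · have h1 := Submodule.finrank_sup_add_finrank_inf_eq (Submodule.span F {a2}) (leibGamma β 3)
      rw [hinf23, finrank_bot, finrank_span_singleton ha2ne, hfr3] at h1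
      rw [hfr2]
      omega
  have ha3ne : a3 ≠ 0 := by
    intro h0
    apply h3ne
    have haz : ∀ z ∈ leibGamma β 2, β a z = 0 := by
      intro z hz
      rw [← hG2] at hz
      obtain ⟨y, hy, t, ht, rfl⟩ := Submodule.mem_sup.mp hz
      obtain ⟨c, rfl⟩ := Submodule.mem_span_singleton.mp hy
      rw [map_add, map_smul, hg4z a t ht, add_zero, ← ha3def, h0, smul_zero]
    rw [eq_bot_iff, show (3:ℕ) = 1+2 from rfl, leibGamma_def]
    apply Submodule.span_le.mpr
    rintro x ⟨p, q, hq, rfl⟩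
    obtain ⟨c, s, hs, rfl⟩ := hdecomp p
    have hs0 : ∀ x : L, β s x = 0 := hsq s (by rw [h2K]; exact hs)
    show β (c • a + s) q ∈ (⊥ : Submodule F L)
    simp [Submodule.mem_bot, map_add, map_smul, hs0, haz q hq]
  have h3span : leibGamma β 3 = Submodule.span F {a3} := by
    refine (Submodule.eq_of_le_of_finrank_le
      (Submodule.span_le.mpr (Set.singleton_subset_iff.mpr ha3mem)) ?_).symm
    rw [hfr3, finrank_span_singleton ha3ne]
  have ha3K : a3 ∈ leibKer β := by rw [h2K]; exact h32.le ha3mem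
  -- the basis
  have htop2 : Submodule.span F {a} ⊔ (Submodule.span F {a2} ⊔ Submodule.span F {a3}) = ⊤ := by
    rw [← h3span, hG2, hsup]
  have hv : (⊤ : Submodule F L) ≤ Submodule.span F (Set.range ![a, a2, a3]) := by
    rw [← htop2]
    refine sup_le ?_ (sup_le ?_ ?_) <;>
      refine Submodule.span_le.mpr (Set.singleton_subset_iff.mpr (Submodule.subset_span ?_))
    · exact ⟨0, rfl⟩
    · exact ⟨1, rfl⟩
    · exact ⟨2, rfl⟩
  let b : Basis (Fin 3) F L := basisOfTopLeSpanOfCardEqFinrank ![a, a2, a3] hv (by simp [hdim])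
  have hb : ⇑b = ![a, a2, a3] := coe_basisOfTopLeSpanOfCardEqFinrank _ _ _
  have hb0 : b 0 = a := by rw [hb]; rfl
  have hb1 : b 1 = a2 := by rw [hb]; rfl
  have hb2 : b 2 = a3 := by rw [hb]; rfl
  refine ⟨b, ?_, ?_, ?_, ?_, h4bot, h3ne⟩
  · intro i j
    fin_cases i <;> fin_cases j <;>
      simp [hb0, hb1, hb2, Matrix.vecHead, Matrix.vecTail, ← ha2def, ← ha3def, hba3,
        hsq a2 ha2K, hsq a3 ha3K]
  · rw [hb1, hb2, h2K, ← hG2, h3span, Submodule.span_insert]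
  · have hD2 : leibDerived β ≤ leibGamma β 2 := by
      apply Submodule.span_le.mpr
      rintro x ⟨p, q, rfl⟩
      exact hmem2 p q
    have hKD : leibKer β ≤ leibDerived β := by
      apply Submodule.span_le.mpr
      rintro x ⟨y, rfl⟩
      exact Submodule.subset_span ⟨y, y, rfl⟩
    have : leibDerived β = leibKer β := le_antisymm (h2K ▸ hD2) hKD
    rw [this, hb1, hb2, h2K, ← hG2, h3span, Submodule.span_insert]
  · rw [hb2]
    apply le_antisymm
    · intro x hx
      have hx' : ∀ y : L, β x y = 0 ∧ β y x = 0 := hx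
      obtain ⟨c, s, hs, rfl⟩ := hdecomp x
      rw [← hG2] at hs
      obtain ⟨y, hy, t, ht, rfl⟩ := Submodule.mem_sup.mp hs
      obtain ⟨d, rfl⟩ := Submodule.mem_span_singleton.mp hy
      have hsqt : ∀ z : L, β t z = 0 := hsq t (by rw [h2K]; exact h32.le ht)
      have hsq2 : ∀ z : L, β a2 z = 0 := hsq a2 ha2K
      have hc : c = 0 := by
        have h1 := (hx' a2).1
        rw [map_add, map_add, LinearMap.add_apply, LinearMap.add_apply, hsqt,
          map_smul, map_smul, LinearMap.smul_apply, LinearMap.smul_apply,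
          hsq2, smul_zero, add_zero, add_zero, ← ha3def] at h1
        exact (smul_eq_zero.mp h1).resolve_right ha3ne
      have hd : d = 0 := by
        have h1 := (hx' a).2
        rw [hc, zero_smul, zero_add, map_add, map_smul, hg4z a t ht, add_zero,
          ← ha3def] at h1
        exact (smul_eq_zero.mp h1).resolve_right ha3ne
      rw [hc, hd, zero_smul, zero_smul, zero_add, zero_add]
      rw [h3span] at ht
      exact ht
    · rw [Submodule.span_le, Set.singleton_subset_iff]
      intro y
      refine ⟨hsq a3 ha3K y, ?_⟩
      obtain ⟨c, s, hs, rfl⟩ := hdecomp y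
      have hs0 : ∀ z : L, β s z = 0 := hsq s (by rw [h2K]; exact hs)
      rw [map_add, LinearMap.add_apply, hs0, add_zero, map_smul,
        LinearMap.smul_apply, hba3, smul_zero]
end

section
/- Let F be a field and let L be a non-nilpotent left Leibniz algebra over F with dim_F L = 3 which is not a Lie algebra. Assume ζ(L) ≠ 0 and dim_F Leib(L) = 2. Then there exists a basis (a1, a2, a3) of L with [a1,a1] = a2, [a1,a2] = a2 + a3, and all other brackets of basis vectors equal to zero; moreover Leib(L) = [L,L] = F·a2 ⊕ F·a3 and ζ(L) = F·a3. -/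
open Module Polynomial

variable {F L : Type*} [Field F] [AddCommGroup L] [Module F L]

private lemma pair_span [FiniteDimensional F L] {K : Submodule F L} {z v : L}
    (hK : finrank F K = 2) (hz : z ∈ K) (hv : v ∈ K) (hz0 : z ≠ 0)
    (hvz : v ∉ Submodule.span F {z}) :
    ∀ k ∈ K, ∃ a b : F, k = a • z + b • v := by
  have hv0 : v ≠ 0 := fun h => hvz (h ▸ Submodule.zero_mem _)
  have hle : Submodule.span F {z} ⊔ Submodule.span F {v} ≤ K := by
    apply sup_le <;> rw [Submodule.span_le, Set.singleton_subset_iff] <;> assumption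
  have hinf : Submodule.span F {z} ⊓ Submodule.span F {v} = ⊥ := by
    rw [eq_bot_iff]
    rintro x ⟨hx1, hx2⟩
    obtain ⟨a, ha⟩ := Submodule.mem_span_singleton.1 hx1
    obtain ⟨b, hb⟩ := Submodule.mem_span_singleton.1 hx2
    rcases eq_or_ne b 0 with rfl | hb0
    · simpa using hb.symm
    · exfalso
      apply hvz
      rw [Submodule.mem_span_singleton]
      exact ⟨b⁻¹ * a, by rw [mul_smul, ha, ← hb, inv_smul_smul₀ hb0]⟩
  have heq : Submodule.span F {z} ⊔ Submodule.span F {v} = K := by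
    apply Submodule.eq_of_le_of_finrank_le hle
    rw [hK]
    have h := Submodule.finrank_sup_add_finrank_inf_eq (Submodule.span F {z}) (Submodule.span F {v})
    rw [hinf, finrank_span_singleton hz0, finrank_span_singleton hv0, finrank_bot] at h
    omega
  intro k hk
  rw [← heq] at hk
  obtain ⟨y, hy, w, hw, hyw⟩ := Submodule.mem_sup.1 hk
  obtain ⟨a, rfl⟩ := Submodule.mem_span_singleton.1 hy
  obtain ⟨b, rfl⟩ := Submodule.mem_span_singleton.1 hw
  exact ⟨a, b, hyw.symm⟩

theorem stmt6 (β : L →ₗ[F] L →ₗ[F] L) (hLeib : IsLeibniz β)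
    (hdim : finrank F L = 3) (hnotLie : ∃ a : L, β a a ≠ 0)
    (hnonnil : ¬ ∃ k : ℕ, leibGamma β k = ⊥)
    (hc : lzCenter β ≠ ⊥) (hk : finrank F (leibKer β) = 2) :
    ∃ b : Basis (Fin 3) F L,
      MulTbl β ⇑b ![![b 1, b 1 + b 2, 0], ![0, 0, 0], ![0, 0, 0]] ∧
      leibKer β = Submodule.span F {b 1, b 2} ∧
      leibDerived β = Submodule.span F {b 1, b 2} ∧
      lzCenter β = Submodule.span F {b 2} := by
  classical
  have hFD : FiniteDimensional F L := FiniteDimensional.of_finrank_pos (by rw [hdim]; norm_num)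
  -- Leib kernel left-annihilates
  have hA : ∀ x ∈ leibKer β, ∀ y, β x y = 0 := by
    intro x hx
    induction hx using Submodule.span_induction with
    | mem x hx =>
        obtain ⟨a, rfl⟩ := hx
        intro y
        rw [hLeib a a y]
        exact sub_self _
    | zero => intro y; simp
    | add x y hx hy ihx ihy =>
        intro w
        rw [map_add, LinearMap.add_apply, ihx w, ihy w, add_zero]
    | smul c x hx ih =>
        intro w
        rw [map_smul, LinearMap.smul_apply, ih w, smul_zero]
  have hB : ∀ x y : L, β x y + β y x ∈ leibKer β := by
    intro x y
    have h1 : β (x+y) (x+y) ∈ leibKer β := Submodule.subset_span ⟨x+y, rfl⟩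
    have h2 : β x x ∈ leibKer β := Submodule.subset_span ⟨x, rfl⟩
    have h3 : β y y ∈ leibKer β := Submodule.subset_span ⟨y, rfl⟩
    have key : β x y + β y x = β (x+y) (x+y) - β x x - β y y := by
      simp only [map_add, LinearMap.add_apply]
      abel
    rw [key]
    exact sub_mem (sub_mem h1 h2) h3
  have hC : ∀ (y : L), ∀ x ∈ leibKer β, β y x ∈ leibKer β := by
    intro y x hx
    induction hx using Submodule.span_induction with
    | mem x hx =>
        obtain ⟨a, rfl⟩ := hx
        have h := hLeib y a a
        have key : β y (β a a) = β (β y a) a + β a (β y a) := by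
          rw [h]; abel
        rw [key]
        exact hB (β y a) a
    | zero => simp
    | add a b _ _ iha ihb => rw [map_add]; exact add_mem iha ihb
    | smul c a _ ih => rw [map_smul]; exact Submodule.smul_mem _ _ ih
  -- choose e outside the kernel
  have hKne : leibKer β ≠ ⊤ := by
    intro h
    rw [h, finrank_top] at hk
    omega
  obtain ⟨e, -, he⟩ := SetLike.exists_of_lt (lt_top_iff_ne_top.2 hKne : leibKer β < ⊤)
  have he0 : e ≠ 0 := fun h => he (h ▸ Submodule.zero_mem _)
  have hKe : Submodule.span F {e} ⊔ leibKer β = ⊤ := by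
    apply Submodule.eq_top_of_finrank_eq
    have hinf : Submodule.span F {e} ⊓ leibKer β = ⊥ := by
      rw [eq_bot_iff]
      rintro x ⟨hx1, hx2⟩
      obtain ⟨a, rfl⟩ := Submodule.mem_span_singleton.1 hx1
      rcases eq_or_ne a 0 with rfl | ha
      · simp
      · exact absurd (by simpa [inv_smul_smul₀ ha] using Submodule.smul_mem _ a⁻¹ hx2) he
    have h := Submodule.finrank_sup_add_finrank_inf_eq (Submodule.span F {e}) (leibKer β)
    rw [hinf, finrank_span_singleton he0, hk, finrank_bot] at h
    rw [hdim]
    omega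
  have hdec : ∀ x : L, ∃ (a : F) (k : L), k ∈ leibKer β ∧ x = a • e + k := by
    intro x
    have hx : x ∈ Submodule.span F {e} ⊔ leibKer β := hKe ▸ Submodule.mem_top
    obtain ⟨y, hy, w, hw, hyw⟩ := Submodule.mem_sup.1 hx
    obtain ⟨a, rfl⟩ := Submodule.mem_span_singleton.1 hy
    exact ⟨a, w, hw, hyw.symm⟩
  have hq_mem : β e e ∈ leibKer β := Submodule.subset_span ⟨e, rfl⟩
  have hbr : ∀ x y : L, β x y ∈ leibKer β := by
    intro x y
    obtain ⟨a, k, hkm, rfl⟩ := hdec x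
    obtain ⟨b, m, hmm, rfl⟩ := hdec y
    simp only [map_add, LinearMap.add_apply, map_smul, LinearMap.smul_apply, hA k hkm, add_zero]
    exact add_mem (Submodule.smul_mem _ _ (Submodule.smul_mem _ _ hq_mem))
      (Submodule.smul_mem _ _ (hC e m hmm))
  -- central elements lie in the kernel and are annihilated by e
  have hcent : ∀ x, (∀ y, β x y = 0 ∧ β y x = 0) → x ∈ leibKer β ∧ β e x = 0 := by
    intro x hx
    obtain ⟨a, k, hkm, rfl⟩ := hdec x
    rcases eq_or_ne a 0 with rfl | ha
    · constructor
      · simpa using hkm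
      · simpa using (hx e).2
    · exfalso
      have hez : ∀ y, β e y = 0 := by
        intro y
        have h0 := (hx y).1
        rw [map_add, LinearMap.add_apply, hA k hkm, add_zero, map_smul,
          LinearMap.smul_apply] at h0
        exact (smul_eq_zero.1 h0).resolve_left ha
      have hbot : leibKer β ≤ ⊥ := by
        rw [leibKer, Submodule.span_le]
        rintro _ ⟨w, rfl⟩
        obtain ⟨c, k', hk', rfl⟩ := hdec w
        simp [map_add, LinearMap.add_apply, map_smul, LinearMap.smul_apply, hA k' hk', hez]
      have hk' := hk
      rw [le_bot_iff.1 hbot] at hk'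
      rw [finrank_bot] at hk'
      omega
  -- a nonzero central element z
  obtain ⟨z, hzc, hz0⟩ := (Submodule.ne_bot_iff _).1 hc
  obtain ⟨hzK, hTz⟩ := hcent z hzc
  -- extend z by u inside the kernel
  have hzspan_lt : Submodule.span F {z} < leibKer β := by
    apply lt_of_le_of_ne
    · rw [Submodule.span_le, Set.singleton_subset_iff]; exact hzK
    · intro h
      rw [← h, finrank_span_singleton hz0] at hk
      omega
  obtain ⟨u, huK, hus⟩ := SetLike.exists_of_lt hzspan_lt
  have hzu : ∀ k ∈ leibKer β, ∃ a b : F, k = a • z + b • u := pair_span hk hzK huK hz0 hus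
  have hvK : β e u ∈ leibKer β := hC e u huK
  have hW : ∀ k ∈ leibKer β, ∃ c : F, β e k = c • β e u := by
    intro k hkm
    obtain ⟨a, b, rfl⟩ := hzu k hkm
    exact ⟨b, by rw [map_add, map_smul, map_smul, hTz, smul_zero, zero_add]⟩
  -- lower central series bounds
  have hγ2 : leibGamma β 2 ≤ leibKer β := by
    rw [show leibGamma β 2 = Submodule.span F {x | ∃ a b : L, b ∈ leibGamma β 1 ∧ β a b = x}
      from rfl, Submodule.span_le]
    rintro x ⟨a, b, -, rfl⟩
    exact hbr a b
  have hγ3 : leibGamma β 3 ≤ Submodule.span F {β e u} := by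
    rw [show leibGamma β 3 = Submodule.span F {x | ∃ a b : L, b ∈ leibGamma β 2 ∧ β a b = x}
      from rfl, Submodule.span_le]
    rintro x ⟨a, b, hb, rfl⟩
    obtain ⟨c0, k, hkm, rfl⟩ := hdec a
    obtain ⟨c, hc'⟩ := hW b (hγ2 hb)
    simp only [map_add, LinearMap.add_apply, map_smul, LinearMap.smul_apply, hA k hkm,
      add_zero, hc']
    exact Submodule.smul_mem _ _ (Submodule.smul_mem _ _ (Submodule.mem_span_singleton_self _))
  have hv0 : β e u ≠ 0 := by
    intro hv
    apply hnonnil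
    refine ⟨3, le_bot_iff.1 ?_⟩
    rw [hv, Submodule.span_zero_singleton] at hγ3
    exact hγ3
  obtain ⟨lam, hlam⟩ := hW (β e u) hvK
  have hlam0 : lam ≠ 0 := by
    intro h0
    apply hnonnil
    refine ⟨4, le_bot_iff.1 ?_⟩
    rw [show leibGamma β 4 = Submodule.span F {x | ∃ a b : L, b ∈ leibGamma β 3 ∧ β a b = x}
      from rfl, Submodule.span_le]
    rintro x ⟨a, b, hb, rfl⟩
    obtain ⟨c0, k, hkm, rfl⟩ := hdec a
    obtain ⟨c, rfl⟩ := Submodule.mem_span_singleton.1 (hγ3 hb)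
    simp [map_add, LinearMap.add_apply, map_smul, LinearMap.smul_apply, hA k hkm, hlam, h0]
  have hvz : β e u ∉ Submodule.span F {z} := by
    intro hmem
    obtain ⟨c, hc'⟩ := Submodule.mem_span_singleton.1 hmem
    apply hv0
    have h0 : β e (β e u) = 0 := by rw [← hc', map_smul, hTz, smul_zero]
    rw [hlam] at h0
    exact (smul_eq_zero.1 h0).resolve_left hlam0
  have hzv : ∀ k ∈ leibKer β, ∃ a b : F, k = a • z + b • β e u :=
    pair_span hk hzK hvK hz0 hvz
  obtain ⟨d, c, hq⟩ := hzv (β e e) hq_mem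
  have hd0 : d ≠ 0 := by
    intro h0
    have hKv : leibKer β ≤ Submodule.span F {β e u} := by
      rw [leibKer, Submodule.span_le]
      rintro _ ⟨w, rfl⟩
      obtain ⟨a, k, hkm, rfl⟩ := hdec w
      obtain ⟨t, ht⟩ := hW k hkm
      have hww : β (a • e + k) (a • e + k) = (a*a*c + a*t) • β e u := by
        simp only [map_add, LinearMap.add_apply, map_smul, LinearMap.smul_apply, hA k hkm,
          add_zero, ht, hq, h0, zero_smul, zero_add]
        module
      show (β (a • e + k)) (a • e + k) ∈ Submodule.span F {β e u}
      rw [hww]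
      exact Submodule.smul_mem _ _ (Submodule.mem_span_singleton_self _)
    obtain ⟨t, ht⟩ := Submodule.mem_span_singleton.1 (hKv hzK)
    have h1 : (0 : L) = t • (lam • β e u) := by rw [← hTz, ← ht, map_smul, hlam]
    rcases smul_eq_zero.1 h1.symm with h2 | h2
    · rw [h2, zero_smul] at ht
      exact hz0 ht.symm
    · exact hv0 ((smul_eq_zero.1 h2).resolve_left hlam0)
  -- the construction
  set m := (1 - c) • u with hm_def
  have hmK : m ∈ leibKer β := Submodule.smul_mem _ _ huK
  have hem : β e m = (1 - c) • β e u := by rw [hm_def, map_smul]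
  set s := lam⁻¹ with hs_def
  have hs0 : s ≠ 0 := inv_ne_zero hlam0
  set b1 := s • (e + m) with hb1
  set b2 := (s*s) • (d • z + β e u) with hb2
  set b3 := (-(s*s*d)) • z with hb3
  have hb2K : b2 ∈ leibKer β :=
    Submodule.smul_mem _ _ (add_mem (Submodule.smul_mem _ _ hzK) hvK)
  have hb3K : b3 ∈ leibKer β := Submodule.smul_mem _ _ hzK
  have h11 : β b1 b1 = b2 := by
    simp only [hb1, hb2, map_add, LinearMap.add_apply, map_smul, LinearMap.smul_apply,
      hA m hmK, add_zero, hem, hq]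
    module
  have h12 : β b1 b2 = b2 + b3 := by
    have key : β b1 b2 = (s*(s*s)*lam) • β e u := by
      simp only [hb1, hb2, map_add, LinearMap.add_apply, map_smul, LinearMap.smul_apply,
        hA m hmK, add_zero, hTz, hlam]
      module
    have hscal : s*(s*s)*lam = s*s := by
      rw [hs_def]
      field_simp
    rw [key, hscal, hb2, hb3]
    module
  have h13 : β b1 b3 = 0 := by
    simp only [hb1, hb3, map_add, LinearMap.add_apply, map_smul, LinearMap.smul_apply,
      hA m hmK, add_zero, hTz, smul_zero]
  have hre : β e b3 = 0 := by rw [hb3, map_smul, hTz, smul_zero]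
  have hrb3 : ∀ y, β y b3 = 0 := by
    intro y
    obtain ⟨a, k, hkm, rfl⟩ := hdec y
    simp [map_add, LinearMap.add_apply, map_smul, LinearMap.smul_apply, hA k hkm, hre]
  have hsd : -(s*s*d) ≠ 0 := by
    simp only [neg_ne_zero]
    exact mul_ne_zero (mul_ne_zero hs0 hs0) hd0
  have hzb3 : (-(s*s*d))⁻¹ • b3 = z := by rw [hb3, inv_smul_smul₀ hsd]
  have hvb2 : β e u = (s*s)⁻¹ • b2 - d • z := by
    have h1 : (s*s)⁻¹ • b2 = d • z + β e u := by
      rw [hb2, inv_smul_smul₀ (mul_ne_zero hs0 hs0)]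
    rw [h1]
    abel
  -- z and (β e u) lie in span {b2, b3}
  have hzP : z ∈ Submodule.span F {b2, b3} := by
    rw [← hzb3]
    exact Submodule.smul_mem _ _ (Submodule.subset_span (by simp))
  have hvP : β e u ∈ Submodule.span F {b2, b3} := by
    rw [hvb2]
    exact sub_mem (Submodule.smul_mem _ _ (Submodule.subset_span (by simp)))
      (Submodule.smul_mem _ _ hzP)
  have hKP : leibKer β ≤ Submodule.span F {b2, b3} := by
    intro x hx
    obtain ⟨az, bv, rfl⟩ := hzv x hx
    exact add_mem (Submodule.smul_mem _ _ hzP) (Submodule.smul_mem _ _ hvP)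
  -- span of the triple is everything
  have hb1S : b1 ∈ Submodule.span F (Set.range ![b1, b2, b3]) :=
    Submodule.subset_span ⟨0, rfl⟩
  have hb2S : b2 ∈ Submodule.span F (Set.range ![b1, b2, b3]) :=
    Submodule.subset_span ⟨1, rfl⟩
  have hb3S : b3 ∈ Submodule.span F (Set.range ![b1, b2, b3]) :=
    Submodule.subset_span ⟨2, rfl⟩
  have hPS : Submodule.span F {b2, b3} ≤ Submodule.span F (Set.range ![b1, b2, b3]) := by
    rw [Submodule.span_le]
    rintro x (rfl | rfl)
    · exact hb2S
    · exact hb3S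
  have heS : e ∈ Submodule.span F (Set.range ![b1, b2, b3]) := by
    have h1 : s⁻¹ • b1 = e + m := by rw [hb1, inv_smul_smul₀ hs0]
    have h2 : e = s⁻¹ • b1 - m := by rw [h1]; abel
    rw [h2]
    exact sub_mem (Submodule.smul_mem _ _ hb1S)
      (hPS (hKP hmK))
  have htop : ⊤ ≤ Submodule.span F (Set.range ![b1, b2, b3]) := by
    intro x _
    obtain ⟨a, k, hkm, rfl⟩ := hdec x
    exact add_mem (Submodule.smul_mem _ _ heS) (hPS (hKP hkm))
  let bb : Basis (Fin 3) F L :=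
    basisOfTopLeSpanOfCardEqFinrank ![b1, b2, b3] htop (by rw [hdim]; simp)
  have hcoe : ⇑bb = ![b1, b2, b3] := coe_basisOfTopLeSpanOfCardEqFinrank _ _ _
  have hbb1 : bb 1 = b2 := by rw [hcoe]; rfl
  have hbb2 : bb 2 = b3 := by rw [hcoe]; rfl
  refine ⟨bb, ?_, ?_, ?_, ?_⟩
  · intro i j
    have hbb0 : bb 0 = b1 := by rw [hcoe]; rfl
    fin_cases i <;> fin_cases j <;>
      simp [hbb0, hbb1, hbb2, h11, h12, h13, hA b2 hb2K, hA b3 hb3K, Matrix.vecHead, Matrix.vecTail]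
  · rw [hbb1, hbb2]
    refine le_antisymm hKP ?_
    rw [Submodule.span_le]
    rintro x (rfl | rfl)
    · exact hb2K
    · exact hb3K
  · rw [hbb1, hbb2]
    refine le_antisymm ?_ ?_
    · rw [leibDerived, Submodule.span_le]
      rintro _ ⟨a, b, rfl⟩
      exact hKP (hbr a b)
    · rw [Submodule.span_le]
      have hd2 : b2 ∈ leibDerived β := Submodule.subset_span ⟨b1, b1, h11⟩
      have hd3 : b3 ∈ leibDerived β := by
        have h : b3 = β b1 b2 - b2 := by rw [h12]; abel
        rw [h]
        exact sub_mem (Submodule.subset_span ⟨b1, b2, rfl⟩) hd2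
      rintro x (rfl | rfl)
      · exact hd2
      · exact hd3
  · rw [hbb2]
    refine le_antisymm ?_ ?_
    · intro x hx
      obtain ⟨hxK, hTx⟩ := hcent x hx
      obtain ⟨a, b, rfl⟩ := hzv x hxK
      rw [map_add, map_smul, map_smul, hTz, smul_zero, zero_add, hlam] at hTx
      have hb0 : b = 0 := by
        rcases smul_eq_zero.1 hTx with h | h
        · exact h
        · exact absurd ((smul_eq_zero.1 h).resolve_left hlam0) hv0
      rw [hb0, zero_smul, add_zero, ← hzb3, smul_smul]
      exact Submodule.smul_mem _ _ (Submodule.mem_span_singleton_self _)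
    · rw [Submodule.span_le, Set.singleton_subset_iff]
      intro y
      exact ⟨hA b3 hb3K y, hrb3 y⟩
end

section
/- Let F be a field and let L be a left Leibniz algebra over F with dim_F L = 3 which is not a Lie algebra. Assume ζ(L) = 0 and dim_F Leib(L) = 2. Then there exists a basis (a1, a2, a3) of L such that the bracket is given by one of the following multiplication tables (all brackets of basis vectors not listed being zero): (i) [a1,a1] = [a1,a2] = a2 and [a1,a3] = β·a3 for some β ∈ F, β ≠ 0; (ii) [a1,a1] = a2, [a1,a2] = a2 + γ·a3 (γ ≠ 0), [a1,a3] = β·a3 (β ≠ 0); (iii) [a1,a1] = a2, [a1,a2] = γ·a3 (γ ≠ 0), [a1,a3] = a3; (iv) [a1,a1] = a2, [a1,a2] = a3, [a1,a3] = β·a2 + γ·a3 for some β, γ ∈ F such that the polynomial X² − γX − β is irreducible over F. -/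
open Module Polynomial

variable {F L : Type*} [Field F] [AddCommGroup L] [Module F L]

/-!
Squares are left annihilators (`[[x,x],y] = 0` by the Leibniz identity), so `K = Leib(L)` is a
left ideal with `[K, L] = 0`, and `L = F a ⊕ K` for any `a` with `[a,a] ≠ 0`. An element of `K`
killed by `D = [a, ·]` is central, so `D` is invertible on the plane `K`. Replacing `a` by
`c a + k` with `k ∈ K` scales `D` by `c` and makes the square any prescribed element of `K`; the
table is then read off the normal form of `D`: two independent eigenvectors give (i), a Jordan
block gives (ii), and without eigenvectors `a, [a,a], [a,[a,a]]` give (iv), `X² - γX - β` being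
the minimal polynomial of `D`. Table (iii) has a nonzero centre and does not occur.
-/

section TwoDimensional

variable {V : Type*} [AddCommGroup V] [Module F V]

lemma LinearIndependent.exists_eq_smul_add_smul (hV : finrank F V = 2) {v w : V}
    (h : LinearIndependent F ![v, w]) (x : V) : ∃ s t : F, s • v + t • w = x := by
  have hspan := h.span_eq_top_of_card_eq_finrank (by simp [hV])
  rw [Matrix.range_cons_cons_empty] at hspan
  exact Submodule.mem_span_pair.mp (hspan ▸ Submodule.mem_top)

lemma LinearMap.eigenvalue_ne_zero_of_injective {f : V →ₗ[F] V} (hf : Function.Injective f)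
    {μ : F} {v : V} (hv : v ≠ 0) (hfv : f v = μ • v) : μ ≠ 0 := by
  rintro rfl
  exact hv (hf (by rw [hfv, zero_smul, map_zero]))

theorem Module.End.exists_eigenvector_pair_or_jordan (hV : finrank F V = 2) (f : Module.End F V)
    {μ : F} {v : V} (hv : v ≠ 0) (hfv : f v = μ • v) :
    (∃ (w : V) (ν : F), LinearIndependent F ![v, w] ∧ f w = ν • w) ∨
      ∃ (w : V) (s : F), LinearIndependent F ![v, w] ∧ s ≠ 0 ∧ f w = s • v + μ • w := by
  obtain ⟨w, hvw⟩ := exists_linearIndependent_pair_of_one_lt_finrank (R := F) (by omega) hv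
  obtain ⟨s, t, hfw⟩ := hvw.exists_eq_smul_add_smul hV (f w)
  rcases eq_or_ne t μ with rfl | ht
  · rcases eq_or_ne s 0 with rfl | hs
    · exact .inl ⟨w, t, hvw, by rw [← hfw, zero_smul, zero_add]⟩
    · exact .inr ⟨w, s, hvw, hs, hfw.symm⟩
  · -- `c • v + w` is an eigenvector for `t` exactly when `c * (t - μ) = s`
    refine .inl ⟨(s / (t - μ)) • v + w, t, by simpa, ?_⟩
    rw [map_add, map_smul, hfv, ← hfw]
    have : t - μ ≠ 0 := sub_ne_zero.mpr ht
    match_scalars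
    · field_simp
      ring
    · ring

theorem Module.End.exists_irreducible_minpoly_of_forall_not_eigenvector (hV : finrank F V = 2)
    (f : Module.End F V) (hf : ∀ (μ : F) (v : V), f v = μ • v → v = 0) {v : V} (hv : v ≠ 0) :
    LinearIndependent F ![v, f v] ∧
      ∃ s t : F, Irreducible (X ^ 2 - C t * X - C s) ∧ f (f v) = s • v + t • f v := by
  have hind : LinearIndependent F ![v, f v] :=
    (LinearIndependent.pair_iff' hv).mpr fun c hc => hv (hf c v hc.symm)
  obtain ⟨s, t, hst⟩ := hind.exists_eq_smul_add_smul hV (f (f v))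
  refine ⟨hind, s, t, irreducible_of_degree_le_three_of_not_isRoot ?_ fun r hr => hv ?_, hst.symm⟩
  · rw [show (X ^ 2 - C t * X - C s : F[X]).natDegree = 2 by compute_degree!]
    decide
  · -- a root `r` makes `f v - r • v` an eigenvector for `t - r`
    have hr : r ^ 2 - t * r - s = 0 := by simpa using hr
    have hu := hf (t - r) (f v - r • v) (by
      rw [map_sub, map_smul, ← hst]
      match_scalars
      · linear_combination -hr
      · ring)
    exact hf r v (sub_eq_zero.mp hu)

end TwoDimensional

lemma Submodule.span_singleton_sup_eq_top [FiniteDimensional F L] {K : Submodule F L}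
    (hK : finrank F K + 1 = finrank F L) {a : L} (ha : a ∉ K) : span F {a} ⊔ K = ⊤ := by
  have hlt : K < span F {a} ⊔ K :=
    lt_of_le_of_ne le_sup_right fun h => ha (h ▸ mem_sup_left (mem_span_singleton_self a))
  have := finrank_lt_finrank_of_lt hlt
  have := finrank_le (span F {a} ⊔ K)
  exact eq_top_of_finrank_eq (by omega)

lemma exists_basis_eq_cons_of_notMem (hdim : finrank F L = 3) {K : Submodule F L} {x : L}
    (hx : x ∉ K) {v w : K} (hvw : LinearIndependent F ![v, w]) :
    ∃ b : Basis (Fin 3) F L, b 0 = x ∧ b 1 = v ∧ b 2 = w := by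
  have hvw' : LinearIndependent F ![(v : L), w] := by
    have e : ![(v : L), w] = K.subtype ∘ ![v, w] := by
      ext i
      fin_cases i <;> rfl
    exact e ▸ hvw.map' K.subtype K.ker_subtype
  have hxvw : LinearIndependent F ![x, v, w] := by
    refine hvw'.finCons fun hmem => hx (Submodule.span_le.mpr ?_ hmem)
    rintro _ ⟨i, rfl⟩
    fin_cases i <;> simp
  refine ⟨basisOfLinearIndependentOfCardEqFinrank hxvw (by simp [hdim]), ?_⟩
  simp [coe_basisOfLinearIndependentOfCardEqFinrank]

variable {β : L →ₗ[F] L →ₗ[F] L}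

lemma apply_self_mem_leibKer (x : L) : β x x ∈ leibKer β :=
  Submodule.subset_span ⟨x, rfl⟩

lemma apply_add_apply_swap_mem_leibKer (x y : L) : β x y + β y x ∈ leibKer β := by
  have : β x y + β y x = β (x + y) (x + y) - β x x - β y y := by
    simp only [map_add, LinearMap.add_apply]
    abel
  rw [this]
  exact sub_mem (sub_mem (apply_self_mem_leibKer _) (apply_self_mem_leibKer _))
    (apply_self_mem_leibKer _)

namespace IsLeibniz

lemma leibKer_le_ker (h : IsLeibniz β) : leibKer β ≤ LinearMap.ker β := by
  refine Submodule.span_le.mpr ?_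
  rintro _ ⟨x, rfl⟩
  ext y
  simp [h x x y]

lemma apply_eq_zero_of_mem_leibKer_s7 (h : IsLeibniz β) {k : L} (hk : k ∈ leibKer β) (y : L) :
    β k y = 0 := by
  rw [LinearMap.mem_ker.mp (h.leibKer_le_ker hk), LinearMap.zero_apply]

lemma notMem_leibKer (h : IsLeibniz β) {x : L} (hx : β x x ≠ 0) : x ∉ leibKer β :=
  fun hmem => hx (h.apply_eq_zero_of_mem_leibKer_s7 hmem x)

lemma apply_mem_leibKer (h : IsLeibniz β) (x : L) {k : L} (hk : k ∈ leibKer β) :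
    β x k ∈ leibKer β := by
  suffices leibKer β ≤ (leibKer β).comap (β x) from this hk
  refine Submodule.span_le.mpr ?_
  rintro _ ⟨c, rfl⟩
  have : β x (β c c) = β (β x c) c + β c (β x c) := by
    rw [h x c c]
    abel
  rw [SetLike.mem_coe, Submodule.mem_comap, this]
  exact apply_add_apply_swap_mem_leibKer _ _

lemma mem_lzCenter (h : IsLeibniz β) {a : L} (hsup : Submodule.span F {a} ⊔ leibKer β = ⊤)
    {k : L} (hk : k ∈ leibKer β) (hak : β a k = 0) : k ∈ lzCenter β := by
  refine fun y => ⟨h.apply_eq_zero_of_mem_leibKer_s7 hk y, ?_⟩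
  obtain ⟨_, hz, k', hk', rfl⟩ := Submodule.mem_sup.mp (hsup ▸ Submodule.mem_top (x := y))
  obtain ⟨c, rfl⟩ := Submodule.mem_span_singleton.mp hz
  simp [hak, h.apply_eq_zero_of_mem_leibKer_s7 hk']

def leftMulLeibKer (h : IsLeibniz β) (a : L) : Module.End F (leibKer β) :=
  (β a).restrict fun _ => h.apply_mem_leibKer a

@[simp]
lemma coe_leftMulLeibKer_apply (h : IsLeibniz β) (a : L) (k : leibKer β) :
    (h.leftMulLeibKer a k : L) = β a k :=
  rfl

lemma bijective_leftMulLeibKer [FiniteDimensional F L] (h : IsLeibniz β)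
    (hc : lzCenter β = ⊥) {a : L} (hsup : Submodule.span F {a} ⊔ leibKer β = ⊤) :
    Function.Bijective (h.leftMulLeibKer a) := by
  have hinj : Function.Injective (h.leftMulLeibKer a) := by
    rw [← LinearMap.ker_eq_bot, Submodule.eq_bot_iff]
    intro k hk
    have hmem := h.mem_lzCenter hsup k.2 (by simpa using congrArg Subtype.val hk)
    rw [hc, Submodule.mem_bot] at hmem
    exact Subtype.ext hmem
  exact ⟨hinj, LinearMap.injective_iff_surjective.mp hinj⟩

lemma exists_apply_self_eq (h : IsLeibniz β) {a : L}
    (hsurj : Function.Surjective (h.leftMulLeibKer a)) {c : F} (hc : c ≠ 0) (w : leibKer β) :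
    ∃ x : L, (∀ y, β x y = c • β a y) ∧ β x x = w := by
  obtain ⟨k, hk⟩ := hsurj ⟨c⁻¹ • (w : L) - c • β a a,
    sub_mem (Submodule.smul_mem _ _ w.2) (Submodule.smul_mem _ _ (apply_self_mem_leibKer a))⟩
  have hak : β a k = c⁻¹ • (w : L) - c • β a a := congrArg Subtype.val hk
  have hx : ∀ y, β (c • a + k) y = c • β a y := fun y => by
    simp [h.apply_eq_zero_of_mem_leibKer_s7 k.2]
  refine ⟨c • a + k, hx, ?_⟩
  rw [hx, map_add, map_smul, hak]
  match_scalars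
  · field_simp
    ring
  · field_simp

lemma mulTbl_of_mem_leibKer (h : IsLeibniz β) {b : Fin 3 → L} {t₀ t₁ t₂ : L}
    (h₁ : b 1 ∈ leibKer β) (h₂ : b 2 ∈ leibKer β) (h₀₀ : β (b 0) (b 0) = t₀)
    (h₀₁ : β (b 0) (b 1) = t₁) (h₀₂ : β (b 0) (b 2) = t₂) :
    MulTbl β b ![![t₀, t₁, t₂], ![0, 0, 0], ![0, 0, 0]] := by
  intro i j
  fin_cases i <;> fin_cases j <;>
    simp [*, h.apply_eq_zero_of_mem_leibKer_s7 h₁, h.apply_eq_zero_of_mem_leibKer_s7 h₂]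

lemma exists_basis_of_apply_self_eq (h : IsLeibniz β) (hdim : finrank F L = 3) {x : L}
    {v w : leibKer β} (hvw : LinearIndependent F ![v, w]) (hxx : β x x = v) :
    ∃ b : Basis (Fin 3) F L, b 0 = x ∧ b 1 = v ∧ b 2 = w := by
  refine exists_basis_eq_cons_of_notMem hdim (h.notMem_leibKer ?_) hvw
  simpa [hxx] using hvw.ne_zero 0

variable {a : L}

lemma exists_basis_mulTbl_of_eigenvectors (h : IsLeibniz β) (hdim : finrank F L = 3)
    (hD : Function.Bijective (h.leftMulLeibKer a)) {v w : leibKer β} {μ ν : F}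
    (hvw : LinearIndependent F ![v, w]) (hv : h.leftMulLeibKer a v = μ • v)
    (hw : h.leftMulLeibKer a w = ν • w) :
    ∃ b : Basis (Fin 3) F L, ∃ β' : F, β' ≠ 0 ∧
      MulTbl β ⇑b ![![b 1, b 1, β' • b 2], ![0, 0, 0], ![0, 0, 0]] := by
  have hμ := LinearMap.eigenvalue_ne_zero_of_injective hD.1 (by simpa using hvw.ne_zero 0) hv
  have hν := LinearMap.eigenvalue_ne_zero_of_injective hD.1 (by simpa using hvw.ne_zero 1) hw
  obtain ⟨x, hx, hxx⟩ := h.exists_apply_self_eq hD.2 (inv_ne_zero hμ) v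
  obtain ⟨b, rfl, hb₁, hb₂⟩ := h.exists_basis_of_apply_self_eq hdim hvw hxx
  refine ⟨b, μ⁻¹ * ν, mul_ne_zero (inv_ne_zero hμ) hν,
    h.mulTbl_of_mem_leibKer (hb₁ ▸ v.2) (hb₂ ▸ w.2) (hxx.trans hb₁.symm) ?_ ?_⟩
  · rw [hb₁, hx, ← h.coe_leftMulLeibKer_apply, hv, Submodule.coe_smul, inv_smul_smul₀ hμ]
  · rw [hb₂, hx, ← h.coe_leftMulLeibKer_apply, hw, Submodule.coe_smul, smul_smul]

lemma exists_basis_mulTbl_of_jordan (h : IsLeibniz β) (hdim : finrank F L = 3)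
    (hD : Function.Bijective (h.leftMulLeibKer a)) {v w : leibKer β} {μ s : F}
    (hvw : LinearIndependent F ![v, w]) (hs : s ≠ 0) (hv : h.leftMulLeibKer a v = μ • v)
    (hw : h.leftMulLeibKer a w = s • v + μ • w) :
    ∃ b : Basis (Fin 3) F L, ∃ γ β' : F, γ ≠ 0 ∧ β' ≠ 0 ∧
      MulTbl β ⇑b ![![b 1, b 1 + γ • b 2, β' • b 2], ![0, 0, 0], ![0, 0, 0]] := by
  have hμ := LinearMap.eigenvalue_ne_zero_of_injective hD.1 (by simpa using hvw.ne_zero 0) hv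
  obtain ⟨x, hx, hxx⟩ := h.exists_apply_self_eq hD.2 (inv_ne_zero hμ) w
  obtain ⟨b, rfl, hb₁, hb₂⟩ :=
    h.exists_basis_of_apply_self_eq hdim (LinearIndependent.pair_symm_iff.mp hvw) hxx
  refine ⟨b, μ⁻¹ * s, 1, mul_ne_zero (inv_ne_zero hμ) hs, one_ne_zero,
    h.mulTbl_of_mem_leibKer (hb₁ ▸ w.2) (hb₂ ▸ v.2) (hxx.trans hb₁.symm) ?_ ?_⟩
  · rw [hb₁, hb₂, hx, ← h.coe_leftMulLeibKer_apply, hw]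
    simp only [Submodule.coe_add, Submodule.coe_smul]
    match_scalars <;> field_simp
  · rw [hb₂, hx, ← h.coe_leftMulLeibKer_apply, hv, Submodule.coe_smul, inv_smul_smul₀ hμ,
      one_smul]

lemma exists_basis_mulTbl_of_forall_not_eigenvector (h : IsLeibniz β)
    (hdim : finrank F L = 3) (hk : finrank F (leibKer β) = 2) (ha : β a a ≠ 0)
    (hD : ∀ (μ : F) (v : leibKer β), h.leftMulLeibKer a v = μ • v → v = 0) :
    ∃ b : Basis (Fin 3) F L, ∃ β' γ : F, Irreducible (X ^ 2 - C γ * X - C β' : F[X]) ∧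
      MulTbl β ⇑b ![![b 1, b 2, β' • b 1 + γ • b 2], ![0, 0, 0], ![0, 0, 0]] := by
  set v : leibKer β := ⟨β a a, apply_self_mem_leibKer a⟩
  obtain ⟨hind, s, t, hirr, hst⟩ :=
    (h.leftMulLeibKer a).exists_irreducible_minpoly_of_forall_not_eigenvector hk hD (v := v)
      (by simpa [v] using ha)
  obtain ⟨b, rfl, hb₁, hb₂⟩ := h.exists_basis_of_apply_self_eq hdim hind rfl
  refine ⟨b, s, t, hirr, h.mulTbl_of_mem_leibKer (hb₁ ▸ v.2) (hb₂ ▸ (h.leftMulLeibKer _ v).2)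
    hb₁.symm (by rw [hb₁, hb₂]; rfl) ?_⟩
  rw [hb₁, hb₂, ← h.coe_leftMulLeibKer_apply, hst, Submodule.coe_add, Submodule.coe_smul,
    Submodule.coe_smul]

end IsLeibniz

theorem stmt7 (β : L →ₗ[F] L →ₗ[F] L) (hLeib : IsLeibniz β)
    (hdim : finrank F L = 3) (hnotLie : ∃ a : L, β a a ≠ 0)
    (hc : lzCenter β = ⊥) (hk : finrank F (leibKer β) = 2) :
    ∃ b : Basis (Fin 3) F L,
      (∃ β' : F, β' ≠ 0 ∧ MulTbl β ⇑b ![![b 1, b 1, β' • b 2], ![0, 0, 0], ![0, 0, 0]]) ∨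
      (∃ γ β' : F, γ ≠ 0 ∧ β' ≠ 0 ∧
        MulTbl β ⇑b ![![b 1, b 1 + γ • b 2, β' • b 2], ![0, 0, 0], ![0, 0, 0]]) ∨
      (∃ γ : F, γ ≠ 0 ∧ MulTbl β ⇑b ![![b 1, γ • b 2, b 2], ![0, 0, 0], ![0, 0, 0]]) ∨
      (∃ β' γ : F, Irreducible (X ^ 2 - C γ * X - C β' : F[X]) ∧
        MulTbl β ⇑b ![![b 1, b 2, β' • b 1 + γ • b 2], ![0, 0, 0], ![0, 0, 0]]) := by
  have : FiniteDimensional F L := .of_finrank_pos (by omega)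
  obtain ⟨a, ha⟩ := hnotLie
  have hsup := Submodule.span_singleton_sup_eq_top (by omega) (hLeib.notMem_leibKer ha)
  have hD := hLeib.bijective_leftMulLeibKer hc hsup
  by_cases hev : ∃ (μ : F) (v : leibKer β), v ≠ 0 ∧ hLeib.leftMulLeibKer a v = μ • v
  · obtain ⟨μ, v, hv, hDv⟩ := hev
    rcases (hLeib.leftMulLeibKer a).exists_eigenvector_pair_or_jordan hk hv hDv with
      ⟨w, ν, hvw, hDw⟩ | ⟨w, s, hvw, hs, hDw⟩
    · obtain ⟨b, hb⟩ := hLeib.exists_basis_mulTbl_of_eigenvectors hdim hD hvw hDv hDw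
      exact ⟨b, .inl hb⟩
    · obtain ⟨b, hb⟩ := hLeib.exists_basis_mulTbl_of_jordan hdim hD hvw hs hDv hDw
      exact ⟨b, .inr (.inl hb)⟩
  · obtain ⟨b, hb⟩ := hLeib.exists_basis_mulTbl_of_forall_not_eigenvector hdim hk ha
      fun μ v hDv => by_contra fun hv => hev ⟨μ, v, hv, hDv⟩
    exact ⟨b, .inr (.inr (.inr hb))⟩
end

section
/- Let F be a field and let L be a left Leibniz algebra over F with dim_F L = 3 which is not a Lie algebra. Assume Leib(L) ⊆ ζ(L), dim_F Leib(L) = 1, L/Leib(L) is abelian, and dim_F ζ(L) = 2. Then there exists a basis (a1, a2, a3) of L with [a1,a1] = a3 and all other brackets of basis vectors equal to zero; moreover Leib(L) = [L,L] = F·a3 and ζ(L) = F·a2 ⊕ F·a3. -/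
open Module Polynomial

variable {F L : Type*} [Field F] [AddCommGroup L] [Module F L]

theorem stmt8 (β : L →ₗ[F] L →ₗ[F] L) (hLeib : IsLeibniz β)
    (hdim : finrank F L = 3) (hnotLie : ∃ a : L, β a a ≠ 0)
    (hsub : leibKer β ≤ lzCenter β) (hk : finrank F (leibKer β) = 1)
    (hab : ∀ a b : L, β a b ∈ leibKer β)
    (hcd : finrank F (lzCenter β) = 2) :
    ∃ b : Basis (Fin 3) F L,
      MulTbl β ⇑b ![![b 2, 0, 0], ![0, 0, 0], ![0, 0, 0]] ∧
      leibKer β = Submodule.span F {b 2} ∧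
      leibDerived β = Submodule.span F {b 2} ∧
      lzCenter β = Submodule.span F {b 1, b 2} := by
  obtain ⟨a1, h1⟩ := hnotLie
  have hL : FiniteDimensional F L := FiniteDimensional.of_finrank_eq_succ hdim
  set a3 := β a1 a1 with ha3
  have ha3K : a3 ∈ leibKer β := Submodule.subset_span ⟨a1, rfl⟩
  have hK : leibKer β = Submodule.span F {a3} := by
    symm
    apply Submodule.eq_of_le_of_finrank_eq
    · exact Submodule.span_le.2 (Set.singleton_subset_iff.2 ha3K)
    · rw [hk, finrank_span_singleton h1]
  have hlt : leibKer β < lzCenter β :=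
    lt_of_le_of_ne hsub (by intro h; rw [h, hcd] at hk; omega)
  obtain ⟨a2, ha2C, ha2K⟩ := SetLike.exists_of_lt hlt
  have ha3C : a3 ∈ lzCenter β := hsub ha3K
  have h1C : a1 ∉ lzCenter β := fun h => h1 ((h a1).1)
  have ind23 : LinearIndependent F ![a2, a3] := by
    rw [linearIndependent_fin2]
    refine ⟨h1, fun c hc => ?_⟩
    exact ha2K (hK ▸ Submodule.mem_span_singleton.2 ⟨c, hc⟩)
  have hspan23 : Submodule.span F (Set.range ![a2, a3]) ≤ lzCenter β := by
    apply Submodule.span_le.2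
    rintro x ⟨i, rfl⟩
    fin_cases i <;> assumption
  have ind : LinearIndependent F ![a1, a2, a3] :=
    linearIndependent_fin_cons.2 ⟨ind23, fun h => h1C (hspan23 h)⟩
  have hcard : Fintype.card (Fin 3) = finrank F L := by rw [Fintype.card_fin, hdim]
  refine ⟨basisOfLinearIndependentOfCardEqFinrank ind hcard, ?_, ?_, ?_, ?_⟩
  all_goals
    rw [coe_basisOfLinearIndependentOfCardEqFinrank ind hcard] <;>
    simp only [Matrix.cons_val_zero, Matrix.cons_val_one, Matrix.head_cons,
      Matrix.cons_val_two, Matrix.tail_cons]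
  · intro i j
    fin_cases i <;> fin_cases j <;>
      simp only [Matrix.cons_val_zero, Matrix.cons_val_one, Matrix.head_cons,
        Matrix.cons_val_two, Matrix.tail_cons, Matrix.cons_val', Matrix.empty_val',
        Matrix.cons_val_fin_one] <;>
      first
        | rfl
        | exact (ha2C _).1
        | exact (ha2C _).2
        | exact (ha3C _).1
        | exact (ha3C _).2
  · exact hK
  · apply le_antisymm
    · rw [← hK]
      exact Submodule.span_le.2 (by rintro x ⟨a, b', rfl⟩; exact hab a b')
    · exact Submodule.span_le.2
        (Set.singleton_subset_iff.2 (Submodule.subset_span ⟨a1, a1, rfl⟩))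
  · symm
    apply Submodule.eq_of_le_of_finrank_eq
    · exact Submodule.span_le.2 (by rintro x (rfl | rfl) <;> assumption)
    · have h2 := finrank_span_eq_card ind23
      rw [hcd]
      have hr : Set.range ![a2, a3] = {a2, a3} := by
        ext x
        simp [Fin.exists_fin_two, or_comm]
      rw [← hr, h2, Fintype.card_fin]
end

section
/- Let F be a field and let L be a left Leibniz algebra over F with dim_F L = 3 which is not a Lie algebra. Assume Leib(L) ⊆ ζ(L), dim_F Leib(L) = 1, and L/Leib(L) is non-abelian (there exist a,b ∈ L with [a,b] ∉ Leib(L)). Then dim_F ζ(L) = 1 and ζ(L) = Leib(L). -/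
open Module Polynomial

variable {F L : Type*} [Field F] [AddCommGroup L] [Module F L]

theorem stmt10 (β : L →ₗ[F] L →ₗ[F] L) (hLeib : IsLeibniz β)
    (hdim : finrank F L = 3) (hnotLie : ∃ a : L, β a a ≠ 0)
    (hsub : leibKer β ≤ lzCenter β) (hk : finrank F (leibKer β) = 1)
    (hnab : ∃ a b : L, β a b ∉ leibKer β) :
    finrank F (lzCenter β) = 1 ∧ lzCenter β = leibKer β := by
  have hfin : FiniteDimensional F L := FiniteDimensional.of_finrank_pos (by omega)
  have hle : lzCenter β ≤ leibKer β := by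
    by_contra h
    rw [SetLike.not_le_iff_exists] at h
    obtain ⟨z, hzC, hzK⟩ := h
    have h2 : 2 ≤ finrank F (lzCenter β) := by
      have hlt : leibKer β < leibKer β ⊔ Submodule.span F {z} := by
        refine lt_of_le_of_ne le_sup_left ?_
        intro he
        exact hzK (he ▸ Submodule.mem_sup_right (Submodule.mem_span_singleton_self z))
      have h1 := Submodule.finrank_lt_finrank_of_lt hlt
      have hle2 : leibKer β ⊔ Submodule.span F {z} ≤ lzCenter β := by
        refine sup_le hsub ?_
        rw [Submodule.span_le, Set.singleton_subset_iff]; exact hzC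
      have h3 := Submodule.finrank_mono hle2
      omega
    have hq : finrank F (L ⧸ lzCenter β) ≤ 1 := by
      have h4 := Submodule.finrank_quotient_add_finrank (lzCenter β)
      have h5 := Submodule.finrank_le (lzCenter β)
      omega
    obtain ⟨v, hv⟩ := finrank_le_one_iff.mp hq
    obtain ⟨c, rfl⟩ := Submodule.Quotient.mk_surjective (lzCenter β) v
    obtain ⟨a, b, hab⟩ := hnab
    obtain ⟨s, hs⟩ := hv (Submodule.Quotient.mk a)
    obtain ⟨t, ht⟩ := hv (Submodule.Quotient.mk b)
    have hza : a - s • c ∈ lzCenter β := by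
      rw [← Submodule.Quotient.eq]
      rw [← hs, Submodule.Quotient.mk_smul]
    have hzb : b - t • c ∈ lzCenter β := by
      rw [← Submodule.Quotient.eq]
      rw [← ht, Submodule.Quotient.mk_smul]
    apply hab
    have hab' : β a b = (s * t) • β c c := by
      have e1 : a = s • c + (a - s • c) := by abel
      have e2 : b = t • c + (b - t • c) := by abel
      calc β a b = β (s • c + (a - s • c)) (t • c + (b - t • c)) := by rw [← e1, ← e2]
        _ = (s * t) • β c c := by
            rw [map_add, (hzb _).2, add_zero, map_smul, map_add,
              LinearMap.add_apply, (hza _).1, add_zero, map_smul,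
              LinearMap.smul_apply, smul_smul, mul_comm t s]
    rw [hab']
    exact Submodule.smul_mem _ _ (Submodule.subset_span ⟨c, rfl⟩)
  have heq : lzCenter β = leibKer β := le_antisymm hle hsub
  exact ⟨heq ▸ hk, heq⟩
end

section
/- Let F be a field and let L be a left Leibniz algebra over F with dim_F L = 3 which is not a Lie algebra. Assume Leib(L) ⊆ ζ(L), dim_F Leib(L) = 1, and L/Leib(L) is non-abelian. Then the derived subalgebra [L,L] (the subspace spanned by all brackets [a,b], a,b ∈ L) has dimension 2 over F, and Leib(L) ⊆ [L,L]. -/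
open Module Polynomial

variable {F L : Type*} [Field F] [AddCommGroup L] [Module F L]

theorem stmt11 (β : L →ₗ[F] L →ₗ[F] L) (hLeib : IsLeibniz β)
    (hdim : finrank F L = 3) (hnotLie : ∃ a : L, β a a ≠ 0)
    (hsub : leibKer β ≤ lzCenter β) (hk : finrank F (leibKer β) = 1)
    (hnab : ∃ a b : L, β a b ∉ leibKer β) :
    finrank F (leibDerived β) = 2 ∧ leibKer β ≤ leibDerived β := by
  have hfd : FiniteDimensional F L := FiniteDimensional.of_finrank_pos (by omega)
  -- Leib ≤ derived
  have hLD : leibKer β ≤ leibDerived β :=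
    Submodule.span_mono (by rintro x ⟨a, rfl⟩; exact ⟨a, a, rfl⟩)
  -- a nonzero generator z of Leib
  obtain ⟨z, hzK, hz0⟩ : ∃ z ∈ leibKer β, z ≠ 0 := by
    by_contra h
    push_neg at h
    have hbot : leibKer β = ⊥ := (Submodule.eq_bot_iff _).2 h
    rw [hbot, finrank_bot] at hk
    omega
  have hspanz : Submodule.span F {z} = leibKer β := by
    apply Submodule.eq_of_le_of_finrank_eq
    · rwa [Submodule.span_singleton_le_iff_mem]
    · rw [finrank_span_singleton hz0, hk]
  obtain ⟨e1, e2, hw⟩ := hnab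
  have hw0 : β e1 e2 ≠ 0 := fun h => hw (h ▸ (leibKer β).zero_mem)
  have hzc : ∀ y, β z y = 0 ∧ β y z = 0 := hsub hzK
  have hsq : ∀ a : L, β a a ∈ Submodule.span F ({z} : Set L) := by
    intro a
    rw [hspanz]
    exact Submodule.subset_span ⟨a, rfl⟩
  have hwns : β e1 e2 ∉ Submodule.span F ({z} : Set L) := by rwa [hspanz]
  -- z, e1, e2 are linearly independent
  have hindep3 : LinearIndependent F ![z, e1, e2] := by
    rw [Fintype.linearIndependent_iff]
    intro g hg
    simp only [Fin.sum_univ_three, Matrix.cons_val_zero, Matrix.cons_val_one, Matrix.head_cons,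
      Matrix.cons_val_two, Matrix.tail_cons] at hg
    have h1 : g 1 = 0 := by
      by_contra h1
      have := congrArg (fun x => β x e2) hg
      simp only [map_add, map_smul, LinearMap.add_apply, LinearMap.smul_apply, map_zero,
        LinearMap.zero_apply, (hzc e2).1, smul_zero, zero_add] at this
      have hmem : g 1 • β e1 e2 ∈ Submodule.span F ({z} : Set L) := by
        have : g 1 • β e1 e2 = -(g 2 • β e2 e2) :=
          eq_neg_of_add_eq_zero_left this
        rw [this]
        exact neg_mem (Submodule.smul_mem _ _ (hsq e2))
      exact hwns (by
        have := Submodule.smul_mem (Submodule.span F ({z} : Set L)) (g 1)⁻¹ hmem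
        rwa [smul_smul, inv_mul_cancel₀ h1, one_smul] at this)
    rw [h1, zero_smul, add_zero] at hg
    have h2 : g 2 = 0 := by
      by_contra h2
      have := congrArg (fun x => β e1 x) hg
      simp only [map_add, map_smul, map_zero, (hzc e1).2, smul_zero, zero_add] at this
      exact hw0 (by
        have := congrArg (fun x => (g 2)⁻¹ • x) this
        simpa [smul_smul, inv_mul_cancel₀ h2, smul_zero] using this)
    rw [h2, zero_smul, add_zero] at hg
    have h0 : g 0 = 0 := by
      by_contra h0
      exact hz0 (by
        have := congrArg (fun x => (g 0)⁻¹ • x) hg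
        simpa [smul_smul, inv_mul_cancel₀ h0] using this)
    intro i
    fin_cases i <;> assumption
  -- span of z, e1, e2 is everything
  have hrange3 : Set.range ![z, e1, e2] = {z, e1, e2} := by
    ext x
    simp only [Matrix.range_cons, Matrix.range_empty, Set.union_empty, Set.mem_insert_iff,
      Set.mem_singleton_iff, Set.union_singleton, Set.mem_union]
    tauto
  have htop : Submodule.span F ({z, e1, e2} : Set L) = ⊤ := by
    apply Submodule.eq_top_of_finrank_eq
    rw [← hrange3, finrank_span_eq_card hindep3, hdim]
    simp
  -- the candidate for the derived algebra
  set M : Submodule F L := Submodule.span F ({z, β e1 e2} : Set L) with hM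
  have hzM : z ∈ M := Submodule.subset_span (Set.mem_insert _ _)
  have hwM : β e1 e2 ∈ M := Submodule.subset_span (Set.mem_insert_of_mem _ rfl)
  have hspanzM : Submodule.span F ({z} : Set L) ≤ M :=
    Submodule.span_mono (Set.singleton_subset_iff.2 (Set.mem_insert _ _))
  -- β e2 e1 ∈ M
  have h21 : β e2 e1 ∈ M := by
    have key : β e2 e1 = (β (e1 + e2) (e1 + e2) - β e1 e1 - β e2 e2) - β e1 e2 := by
      simp only [map_add, LinearMap.add_apply]
      abel
    rw [key]
    exact sub_mem (sub_mem (sub_mem (hspanzM (hsq _)) (hspanzM (hsq _))) (hspanzM (hsq _))) hwM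
  -- all brackets of generators lie in M
  have hgen : ∀ x ∈ ({z, e1, e2} : Set L), ∀ y ∈ ({z, e1, e2} : Set L), β x y ∈ M := by
    intro x hx y hy
    simp only [Set.mem_insert_iff, Set.mem_singleton_iff] at hx hy
    rcases hx with hx | hx | hx <;> rcases hy with hy | hy | hy <;> rw [hx, hy]
    · rw [(hzc z).1]; exact M.zero_mem
    · rw [(hzc e1).1]; exact M.zero_mem
    · rw [(hzc e2).1]; exact M.zero_mem
    · rw [(hzc e1).2]; exact M.zero_mem
    · exact hspanzM (hsq e1)
    · exact hwM
    · rw [(hzc e2).2]; exact M.zero_mem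
    · exact h21
    · exact hspanzM (hsq e2)
  -- derived ≤ M
  have hDM : leibDerived β ≤ M := by
    rw [leibDerived, Submodule.span_le]
    rintro x ⟨a, b, rfl⟩
    have ha : a ∈ Submodule.span F ({z, e1, e2} : Set L) := by rw [htop]; trivial
    have hb : b ∈ Submodule.span F ({z, e1, e2} : Set L) := by rw [htop]; trivial
    induction ha, hb using Submodule.span_induction₂ with
    | mem_mem x y hx hy => exact hgen x hx y hy
    | zero_left y hy => simp
    | zero_right x hx => simp
    | add_left x y u hx hy hu h1 h2 =>
        rw [map_add, LinearMap.add_apply]; exact add_mem h1 h2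
    | add_right x y u hx hy hu h1 h2 =>
        rw [map_add]; exact add_mem h1 h2
    | smul_left r x y hx hy h =>
        rw [map_smul, LinearMap.smul_apply]; exact Submodule.smul_mem _ _ h
    | smul_right r x y hx hy h =>
        rw [map_smul]; exact Submodule.smul_mem _ _ h
  -- M ≤ derived
  have hMD : M ≤ leibDerived β := by
    rw [hM, Submodule.span_le]
    rintro x (rfl | rfl)
    · exact hLD hzK
    · exact Submodule.subset_span ⟨e1, e2, rfl⟩
  have hDeq : leibDerived β = M := le_antisymm hDM hMD
  -- z and β e1 e2 are linearly independent
  have hpair : LinearIndependent F ![z, β e1 e2] := by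
    rw [LinearIndependent.pair_iff]
    intro s t hst
    have ht : t = 0 := by
      by_contra ht
      apply hwns
      have : β e1 e2 = (-t⁻¹ * s) • z := by
        have h' : t • β e1 e2 = -(s • z) := eq_neg_of_add_eq_zero_right hst
        have := congrArg (fun x => t⁻¹ • x) h'
        simp only [smul_smul, inv_mul_cancel₀ ht, one_smul, smul_neg] at this
        rw [this, neg_mul, neg_smul, mul_smul]
      rw [this]
      exact Submodule.smul_mem _ _ (Submodule.mem_span_singleton_self z)
    rw [ht, zero_smul, add_zero] at hst
    refine ⟨?_, ht⟩
    by_contra hs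
    exact hz0 (by
      have := congrArg (fun x => s⁻¹ • x) hst
      simpa [smul_smul, inv_mul_cancel₀ hs] using this)
  have hrange2 : Set.range ![z, β e1 e2] = {z, β e1 e2} := by
    ext x
    simp only [Matrix.range_cons, Matrix.range_empty, Set.union_empty, Set.mem_insert_iff,
      Set.mem_singleton_iff, Set.union_singleton, Set.mem_union]
    tauto
  refine ⟨?_, hLD⟩
  rw [hDeq, hM, ← hrange2, finrank_span_eq_card hpair]
  simp
end

section
/- Let F be a field and let L be a left Leibniz algebra over F with dim_F L = 3 which is not a Lie algebra. Assume Leib(L) ⊄ ζ(L), dim_F Leib(L) = 1, L/Leib(L) is abelian, and ζ(L) ≠ 0. Then there exists a basis (a1, a2, a3) of L with [a1,a1] = [a1,a3] = a3 and all other brackets of basis vectors equal to zero; moreover Leib(L) = [L,L] = F·a3 and ζ(L) = F·a2. -/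
open Module Polynomial

variable {F L : Type*} [Field F] [AddCommGroup L] [Module F L]

theorem stmt12 (β : L →ₗ[F] L →ₗ[F] L) (hLeib : IsLeibniz β)
    (hdim : finrank F L = 3) (hnotLie : ∃ a : L, β a a ≠ 0)
    (hnsub : ¬ leibKer β ≤ lzCenter β) (hk : finrank F (leibKer β) = 1)
    (hab : ∀ a b : L, β a b ∈ leibKer β)
    (hc : lzCenter β ≠ ⊥) :
    ∃ b : Basis (Fin 3) F L,
      MulTbl β ⇑b ![![b 2, 0, b 2], ![0, 0, 0], ![0, 0, 0]] ∧
      leibKer β = Submodule.span F {b 2} ∧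
      leibDerived β = Submodule.span F {b 2} ∧
      lzCenter β = Submodule.span F {b 1} := by
  classical
  have hFD : FiniteDimensional F L := FiniteDimensional.of_finrank_eq_succ hdim
  -- a generator c of the Leibniz kernel
  obtain ⟨c, hcK, hc0⟩ := (Submodule.ne_bot_iff (leibKer β)).mp (by
    intro h; rw [h] at hk; simp at hk)
  have hspan : leibKer β = Submodule.span F {c} := by
    refine (Submodule.eq_of_le_of_finrank_eq ?_ ?_).symm
    · exact Submodule.span_le.mpr (by simpa using hcK)
    · rw [finrank_span_singleton hc0, hk]
  have hinj : ∀ s u : F, s • c = u • c → s = u := fun s u h =>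
    smul_left_injective F hc0 h
  -- elements of the Leibniz kernel annihilate on the left
  have hsq : ∀ a z : L, β (β a a) z = 0 := fun a z => by
    rw [hLeib a a z, sub_self]
  have hla : ∀ x ∈ leibKer β, ∀ y, β x y = 0 := by
    intro x hx y
    have hsub : leibKer β ≤ LinearMap.ker (β.flip y) := by
      apply Submodule.span_le.mpr
      rintro _ ⟨a, rfl⟩
      simp only [SetLike.mem_coe, LinearMap.mem_ker, LinearMap.flip_apply]
      exact hsq a y
    simpa using hsub hx
  have hcl : ∀ y, β c y = 0 := hla c hcK
  -- every bracket is a multiple of c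
  have hmem : ∀ x y : L, ∃ s : F, s • c = β x y := fun x y =>
    Submodule.mem_span_singleton.mp (hspan ▸ hab x y)
  -- c is not central, so some β y0 c ≠ 0
  have hcnc : c ∉ lzCenter β := fun h =>
    hnsub (hspan ▸ Submodule.span_le.mpr (by simpa using h))
  have hex : ¬ ∀ y, β c y = 0 ∧ β y c = 0 := fun h => hcnc h
  push_neg at hex
  obtain ⟨y0, hy0⟩ := hex
  have hy0c : β y0 c ≠ 0 := by
    by_cases h : β c y0 = 0
    · exact hy0 h
    · exact absurd (hcl y0) h
  obtain ⟨t, ht⟩ := hmem y0 c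
  have ht0 : t ≠ 0 := by
    rintro rfl; rw [zero_smul] at ht; exact hy0c ht.symm
  obtain ⟨a0, ha0c⟩ : ∃ a0 : L, β a0 c = c :=
    ⟨t⁻¹ • y0, by
      rw [map_smul, LinearMap.smul_apply, ← ht, smul_smul,
        inv_mul_cancel₀ ht0, one_smul]⟩
  -- coefficient functions
  choose lam hlam using fun x => hmem x c
  choose rho hrho using fun y => hmem a0 y
  -- key commutation
  have hcomm : ∀ x y : L, β a0 (β x y) = β x (β a0 y) := by
    intro x y
    have h0 : β (β a0 x) y = 0 := hla _ (hab a0 x) y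
    have h1 := hLeib a0 x y
    rw [h0] at h1
    exact sub_eq_zero.mp h1.symm
  -- the structure formula
  have hform : ∀ x y : L, β x y = (lam x * rho y) • c := by
    intro x y
    obtain ⟨s, hs⟩ := hmem x y
    have h1 := hcomm x y
    rw [← hs, map_smul, ha0c] at h1
    rw [← hrho y, map_smul, ← hlam x, smul_smul] at h1
    rw [← hs, hinj _ _ h1, mul_comm]
  have hbcc : β c c = 0 := hcl c
  -- the element a1
  obtain ⟨a1, h1c, ha0a1⟩ : ∃ a1 : L, β a1 c = c ∧ β a0 a1 = c :=
    ⟨a0 + (1 - rho a0) • c, by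
      rw [map_add, map_smul, LinearMap.add_apply, LinearMap.smul_apply,
        ha0c, hbcc, smul_zero, add_zero], by
      rw [map_add, map_smul, ha0c, ← hrho a0, ← add_smul]
      have h : rho a0 + (1 - rho a0) = 1 := by ring
      rw [h, one_smul]⟩
  have hlam_a1 : lam a1 = 1 := hinj _ _ (by rw [hlam, h1c, one_smul])
  have hrho_a1 : rho a1 = 1 := hinj _ _ (by rw [hrho, ha0a1, one_smul])
  have hb11 : β a1 a1 = c := by
    rw [hform a1 a1, hlam_a1, hrho_a1, one_mul, one_smul]
  -- a nonzero central element a2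
  obtain ⟨a2, ha2C, ha2ne⟩ := (Submodule.ne_bot_iff (lzCenter β)).mp hc
  have ha2 : ∀ y, β a2 y = 0 ∧ β y a2 = 0 := ha2C
  have hA2l : ∀ y, β a2 y = 0 := fun y => (ha2 y).1
  have hA2r : ∀ y, β y a2 = 0 := fun y => (ha2 y).2
  -- linear independence
  have li : LinearIndependent F ![a1, a2, c] := by
    rw [Fintype.linearIndependent_iff]
    intro g hg
    rw [Fin.sum_univ_three] at hg
    simp only [Matrix.cons_val_zero, Matrix.cons_val_one, Matrix.head_cons,
      Matrix.cons_val_two, Matrix.tail_cons] at hg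
    have e1 : g 0 • c = 0 := by
      calc g 0 • c = β (g 0 • a1 + g 1 • a2 + g 2 • c) c := by
            simp [map_add, map_smul, LinearMap.add_apply, LinearMap.smul_apply,
              h1c, hA2l, hbcc]
        _ = 0 := by rw [hg]; simp
    have h0 : g 0 = 0 := by
      rcases smul_eq_zero.mp e1 with h | h
      · exact h
      · exact absurd h hc0
    have e2 : (g 0 + g 2) • c = 0 := by
      calc (g 0 + g 2) • c = β a0 (g 0 • a1 + g 1 • a2 + g 2 • c) := by
            simp [map_add, map_smul, ha0a1, hA2r, ha0c, add_smul]
        _ = 0 := by rw [hg, map_zero]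
    have h2 : g 2 = 0 := by
      rw [h0, zero_add] at e2
      rcases smul_eq_zero.mp e2 with h | h
      · exact h
      · exact absurd h hc0
    have h1 : g 1 = 0 := by
      rw [h0, h2, zero_smul, zero_smul, zero_add, add_zero] at hg
      rcases smul_eq_zero.mp hg with h | h
      · exact h
      · exact absurd h ha2ne
    intro i
    fin_cases i
    · exact h0
    · exact h1
    · exact h2
  have hcard : Fintype.card (Fin 3) = finrank F L := by simp [hdim]
  refine ⟨basisOfLinearIndependentOfCardEqFinrank li hcard, ?_, ?_, ?_, ?_⟩ <;>
    have hbcoe : ⇑(basisOfLinearIndependentOfCardEqFinrank li hcard) = ![a1, a2, c] :=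
      coe_basisOfLinearIndependentOfCardEqFinrank li hcard
  case _ =>
    intro i j
    fin_cases i <;> fin_cases j <;>
      simp [hbcoe, hb11, h1c, hA2l, hA2r, hcl, Matrix.vecHead, Matrix.vecTail]
  case _ =>
    have hb2 : basisOfLinearIndependentOfCardEqFinrank li hcard 2 = c := by
      rw [show (basisOfLinearIndependentOfCardEqFinrank li hcard) 2
          = (⇑(basisOfLinearIndependentOfCardEqFinrank li hcard)) 2 from rfl, hbcoe]
      rfl
    rw [hb2]; exact hspan
  case _ =>
    have hb2 : basisOfLinearIndependentOfCardEqFinrank li hcard 2 = c := by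
      rw [show (basisOfLinearIndependentOfCardEqFinrank li hcard) 2
          = (⇑(basisOfLinearIndependentOfCardEqFinrank li hcard)) 2 from rfl, hbcoe]
      rfl
    rw [hb2]
    apply le_antisymm
    · apply Submodule.span_le.mpr
      rintro x ⟨a, b', rfl⟩
      exact hspan ▸ hab a b'
    · exact Submodule.span_le.mpr
        (Set.singleton_subset_iff.mpr (Submodule.subset_span ⟨a1, c, h1c⟩))
  case _ =>
    set B := basisOfLinearIndependentOfCardEqFinrank li hcard with hBdef
    have hb0 : B 0 = a1 := by rw [show B 0 = (⇑B) 0 from rfl, hbcoe]; rfl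
    have hb1 : B 1 = a2 := by rw [show B 1 = (⇑B) 1 from rfl, hbcoe]; rfl
    have hb2 : B 2 = c := by rw [show B 2 = (⇑B) 2 from rfl, hbcoe]; rfl
    rw [hb1]
    apply le_antisymm
    · intro x hx
      have hx' : ∀ y, β x y = 0 ∧ β y x = 0 := hx
      have hrep := B.sum_repr x
      rw [Fin.sum_univ_three, hb0, hb1, hb2] at hrep
      set r0 := B.repr x 0
      set r1 := B.repr x 1
      set r2 := B.repr x 2
      have e1 : r0 • c = 0 := by
        calc r0 • c = β x c := by
              rw [← hrep]
              simp [map_add, map_smul, LinearMap.add_apply, LinearMap.smul_apply,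
                h1c, hA2l, hbcc]
          _ = 0 := (hx' c).1
      have h0 : r0 = 0 := by
        rcases smul_eq_zero.mp e1 with h | h
        · exact h
        · exact absurd h hc0
      have e2 : (r0 + r2) • c = 0 := by
        calc (r0 + r2) • c = β a0 x := by
              rw [← hrep]
              simp [map_add, map_smul, ha0a1, hA2r, ha0c, add_smul]
          _ = 0 := (hx' a0).2
      have h2 : r2 = 0 := by
        rw [h0, zero_add] at e2
        rcases smul_eq_zero.mp e2 with h | h
        · exact h
        · exact absurd h hc0
      rw [h0, h2, zero_smul, zero_smul, zero_add, add_zero] at hrep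
      exact Submodule.mem_span_singleton.mpr ⟨r1, hrep⟩
    · exact Submodule.span_le.mpr (Set.singleton_subset_iff.mpr ha2C)
end

section
/- Let F be a field and let L be a left Leibniz algebra over F with dim_F L = 3 which is not a Lie algebra. Assume ζ(L) = 0, dim_F Leib(L) = 1, and L/Leib(L) is non-abelian. Suppose a1 ∈ L satisfies [a1,a1] = a3 ≠ 0, [a1,a3] = 0, the subspace A = F·a1 ⊕ F·a3 is an ideal of L (i.e., [x,u], [u,x] ∈ A for all x ∈ L, u ∈ A), and there exists b ∈ L with b ∉ A, [b,b] = 0, and [b,a1] ∈ a1 + F·a3. Then the characteristic of F is not 2. -/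
/-!
In a left Leibniz algebra left multiplication by a square `[a,a]` vanishes, and the Leibniz
identity gives `[b,[a₁,a₁]] = [[b,a₁],a₁] + [a₁,[b,a₁]]`. With `[b,a₁] = a₁ + α a₃` both summands
equal `a₃ = [a₁,a₁]`, so `[b,a₃] = 2 a₃`. In characteristic `2` the element `a₃` is therefore
annihilated on both sides by `b`, `a₁`, `a₃`, which span `L`, so `a₃` is a nonzero central element.
-/

open Module Polynomial

variable {F L : Type*} [Field F] [AddCommGroup L] [Module F L]

theorem Submodule.span_insert_eq_top_of_notMem {K V : Type*} [DivisionRing K] [AddCommGroup V]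
    [Module K V] [FiniteDimensional K V] {s : Set V} {b : V}
    (hs : finrank K (span K s) + 1 = finrank K V) (hb : b ∉ span K s) :
    span K (insert b s) = ⊤ := by
  have hlt : span K s < span K (insert b s) :=
    lt_of_le_of_ne (span_mono (Set.subset_insert b s)) fun h =>
      hb (h ▸ subset_span (Set.mem_insert b s))
  refine eq_top_of_finrank_eq (le_antisymm (finrank_le _) ?_)
  have := finrank_lt_finrank_of_lt hlt
  omega

namespace IsLeibniz

variable {β : L →ₗ[F] L →ₗ[F] L}

theorem apply_apply (hβ : IsLeibniz β) (a b c : L) :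
    β a (β b c) = β (β a b) c + β b (β a c) := by
  rw [hβ a b c, sub_add_cancel]

theorem square_apply (hβ : IsLeibniz β) (a c : L) : β (β a a) c = 0 := by
  rw [hβ a a c, sub_self]

theorem linearIndependent_square (hβ : IsLeibniz β) {a : L} (ha : β a a ≠ 0) :
    LinearIndependent F ![a, β a a] := by
  have ha0 : a ≠ 0 := by
    rintro rfl
    simp at ha
  refine (LinearIndependent.pair_iff' ha0).2 fun c hc => ha ?_
  have h := hβ.square_apply a a
  rw [← hc, map_smul, LinearMap.smul_apply] at h
  rcases smul_eq_zero.1 h with rfl | h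
  · rw [← hc, zero_smul]
  · exact h

theorem apply_square_eq_two_smul (hβ : IsLeibniz β) {a b : L} {α : F}
    (hba : β b a = a + α • β a a) (ha : β a (β a a) = 0) :
    β b (β a a) = (2 : F) • β a a := by
  rw [hβ.apply_apply, hba, map_add, LinearMap.add_apply, map_smul, LinearMap.smul_apply,
    hβ.square_apply, map_add, map_smul, ha]
  simp only [smul_zero, add_zero, two_smul]

end IsLeibniz

theorem stmt15_general (β : L →ₗ[F] L →ₗ[F] L) (hLeib : IsLeibniz β)
    (hdim : finrank F L = 3)
    (hc : lzCenter β = ⊥)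
    (a1 a3 : L) (ha1 : β a1 a1 = a3) (ha3 : a3 ≠ 0) (h13 : β a1 a3 = 0)
    (b : L) (hbA : b ∉ Submodule.span F ({a1, a3} : Set L))
    (hba : ∃ α : F, β b a1 = a1 + α • a3) :
    ringChar F ≠ 2 := by
  intro hchar
  have : CharP F 2 := ringChar.of_eq hchar
  have : FiniteDimensional F L := .of_finrank_pos (by omega)
  obtain ⟨α, hba⟩ := hba
  subst ha1
  have hb3 : β b (β a1 a1) = 0 := by
    rw [hLeib.apply_square_eq_two_smul hba h13, CharTwo.two_eq_zero, zero_smul]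
  have hA : finrank F (Submodule.span F ({a1, β a1 a1} : Set L)) + 1 = finrank F L := by
    rw [← Matrix.range_cons_cons_empty, finrank_span_eq_card (hLeib.linearIndependent_square ha3),
      Fintype.card_fin, hdim]
  have hspan := Submodule.span_insert_eq_top_of_notMem hA hbA
  have hright : Submodule.span F {b, a1, β a1 a1} ≤ LinearMap.ker (β.flip (β a1 a1)) := by
    rw [Submodule.span_le]
    rintro x (rfl | rfl | rfl) <;> simp [hb3, h13, hLeib.square_apply]
  have hcentral : β a1 a1 ∈ lzCenter β := fun y =>
    ⟨hLeib.square_apply a1 y, hright (hspan ▸ Submodule.mem_top)⟩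
  exact ha3 (by rwa [hc, Submodule.mem_bot] at hcentral)

theorem stmt15 (β : L →ₗ[F] L →ₗ[F] L) (hLeib : IsLeibniz β)
    (hdim : finrank F L = 3) (hnotLie : ∃ a : L, β a a ≠ 0)
    (hc : lzCenter β = ⊥) (hk : finrank F (leibKer β) = 1)
    (hnab : ∃ a b : L, β a b ∉ leibKer β)
    (a1 a3 : L) (ha1 : β a1 a1 = a3) (ha3 : a3 ≠ 0) (h13 : β a1 a3 = 0)
    (hideal : ∀ x u : L, u ∈ Submodule.span F ({a1, a3} : Set L) →
      β x u ∈ Submodule.span F ({a1, a3} : Set L) ∧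
      β u x ∈ Submodule.span F ({a1, a3} : Set L))
    (b : L) (hbA : b ∉ Submodule.span F ({a1, a3} : Set L)) (hbb : β b b = 0)
    (hba : ∃ α : F, β b a1 = a1 + α • a3) :
    ringChar F ≠ 2 :=
  stmt15_general β hLeib hdim hc a1 a3 ha1 ha3 h13 b hbA hba
end

section
/- Let F be a field and let L be a nilpotent left Leibniz algebra over F with dim_F L = 3 which is not a Lie algebra. Assume dim_F Leib(L) = 2. Then L is cyclic: there exists a ∈ L such that the three vectors a, [a,a], [a,[a,a]] form a basis of L over F. -/
open Module Polynomial

variable {F L : Type*} [Field F] [AddCommGroup L] [Module F L]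

lemma sq_mem_leibKer (β : L →ₗ[F] L →ₗ[F] L) (b : L) : β b b ∈ leibKer β :=
  Submodule.subset_span ⟨b, rfl⟩

lemma leibKer_leftAnn (β : L →ₗ[F] L →ₗ[F] L) (hLeib : IsLeibniz β) :
    ∀ s ∈ leibKer β, ∀ y, β s y = 0 := by
  intro s hs
  refine Submodule.span_induction ?_ ?_ ?_ ?_ hs
  · rintro _ ⟨b, rfl⟩ y
    rw [hLeib b b y, sub_self]
  · intro y; simp
  · intro u v _ _ hu hv y
    rw [map_add, LinearMap.add_apply, hu y, hv y, add_zero]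
  · intro c u _ hu y
    rw [map_smul, LinearMap.smul_apply, hu y, smul_zero]

lemma leibKer_rightIdeal (β : L →ₗ[F] L →ₗ[F] L) (hLeib : IsLeibniz β) :
    ∀ (x : L), ∀ s ∈ leibKer β, β x s ∈ leibKer β := by
  intro x s hs
  have h2 := leibKer_leftAnn β hLeib s hs
  have h1 : β (x + s) (x + s) = β x x + β x s := by
    simp [map_add, h2]
  have h3 : β x s = β (x + s) (x + s) - β x x := by rw [h1]; abel
  rw [h3]
  exact sub_mem (sq_mem_leibKer β _) (sq_mem_leibKer β _)

theorem stmt17 (β : L →ₗ[F] L →ₗ[F] L) (hLeib : IsLeibniz β)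
    (hdim : finrank F L = 3) (hnotLie : ∃ a : L, β a a ≠ 0)
    (hnil : ∃ k : ℕ, leibGamma β k = ⊥)
    (hk : finrank F (leibKer β) = 2) :
    ∃ a : L, ∃ bb : Basis (Fin 3) F L,
      bb 0 = a ∧ bb 1 = β a a ∧ bb 2 = β a (β a a) := by
  have hfd : FiniteDimensional F L := .of_finrank_pos (by omega)
  set K := leibKer β with hKdef
  have hKne : K ≠ ⊤ := by
    intro h
    rw [h, finrank_top, hdim] at hk
    omega
  obtain ⟨a, ha⟩ : ∃ a : L, a ∉ K := by
    by_contra h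
    push_neg at h
    exact hKne (Submodule.eq_top_iff'.2 h)
  have htop : K ⊔ Submodule.span F {a} = ⊤ := by
    apply Submodule.eq_top_of_finrank_eq
    have hlt : K < K ⊔ Submodule.span F {a} := by
      refine lt_of_le_of_ne le_sup_left ?_
      intro h
      apply ha
      rw [h]
      exact Submodule.mem_sup_right (Submodule.mem_span_singleton_self a)
    have h3 := Submodule.finrank_lt_finrank_of_lt hlt
    have h4 := Submodule.finrank_le (K ⊔ Submodule.span F {a})
    omega
  have hdec : ∀ x : L, ∃ (c : F) (k : L), k ∈ K ∧ x = c • a + k := by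
    intro x
    have hx : x ∈ K ⊔ Submodule.span F {a} := htop ▸ Submodule.mem_top
    obtain ⟨k, hkK, s, hs, rfl⟩ := Submodule.mem_sup.1 hx
    obtain ⟨c, rfl⟩ := Submodule.mem_span_singleton.1 hs
    exact ⟨c, k, hkK, by abel⟩
  set D : L →ₗ[F] L := β a with hDdef
  have hDK : ∀ y, D y ∈ K := by
    intro y
    obtain ⟨c, k, hkK, rfl⟩ := hdec y
    rw [hDdef, map_add, map_smul]
    exact add_mem (Submodule.smul_mem _ _ (sq_mem_leibKer β a))
      (leibKer_rightIdeal β hLeib a k hkK)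
  have hKR : ∀ k ∈ K, ∃ z, D z = k := by
    intro k hkK
    have : K ≤ LinearMap.range D := by
      rw [hKdef, leibKer, Submodule.span_le]
      rintro _ ⟨b, rfl⟩
      obtain ⟨c, k', hk'K, hb⟩ := hdec b
      refine ⟨c • b, ?_⟩
      have e : β b = c • β a + β k' := by rw [hb, map_add, map_smul]
      show D (c • b) = β b b
      rw [map_smul, e, LinearMap.add_apply, LinearMap.smul_apply,
        leibKer_leftAnn β hLeib k' hk'K b, add_zero]
    exact this hkK
  -- nilpotency of D
  have hpowsucc : ∀ (n : ℕ) (w : L), (D ^ (n + 1)) w = (D ^ n) (D w) := by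
    intro n w
    rw [pow_succ]
    rfl
  have hpowsucc' : ∀ (n : ℕ) (w : L), (D ^ (n + 1)) w = D ((D ^ n) w) := by
    intro n w
    rw [pow_succ']
    rfl
  have hpow : ∀ (n : ℕ) (x : L), (D ^ (n + 1)) x ∈ leibGamma β (n + 2) := by
    intro n
    induction n with
    | zero =>
      intro x
      rw [pow_one]
      exact Submodule.subset_span ⟨a, x, by simp [leibGamma], rfl⟩
    | succ m ih =>
      intro x
      rw [hpowsucc' (m + 1) x]
      exact Submodule.subset_span ⟨a, (D ^ (m + 1)) x, ih x, rfl⟩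
  have hLnontriv : (⊤ : Submodule F L) ≠ ⊥ := by
    intro h
    have h2 := finrank_top F L
    rw [h, finrank_bot] at h2
    omega
  obtain ⟨N, hN1, hN⟩ : ∃ N : ℕ, 1 ≤ N ∧ ∀ x, (D ^ N) x = 0 := by
    obtain ⟨m, hm⟩ := hnil
    match m, hm with
    | 0, hm => exact absurd hm hLnontriv
    | 1, hm => exact absurd hm hLnontriv
    | (n+2), hm =>
      refine ⟨n + 1, by omega, fun x => ?_⟩
      have hx := hpow n x
      rw [hm] at hx
      simpa using hx
  -- D (D a) ≠ 0
  have hD2 : D (D a) ≠ 0 := by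
    intro h0
    have hDa0 : ∀ n : ℕ, (D ^ (n + 2)) a = 0 := by
      intro n
      rw [show n + 2 = n + 1 + 1 from rfl, hpowsucc (n+1) a, hpowsucc n (D a),
        h0, map_zero]
    -- D k lies in iterated images of K
    have hchain : ∀ p : ℕ, ∀ k ∈ K, ∃ k' ∈ K, D k = (D ^ (p + 1)) k' := by
      intro p
      induction p with
      | zero => exact fun k hkK => ⟨k, hkK, by rw [pow_one]⟩
      | succ q ih =>
        intro k hkK
        obtain ⟨k₁, hk₁K, hk₁⟩ := ih k hkK
        obtain ⟨z, rfl⟩ := hKR k₁ hk₁K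
        obtain ⟨c, k₂, hk₂K, rfl⟩ := hdec z
        refine ⟨k₂, hk₂K, ?_⟩
        have e1 : (D ^ (q + 1)) (D a) = 0 := by
          rw [← hpowsucc (q+1) a]; exact hDa0 q
        rw [hk₁]
        simp only [map_add, map_smul]
        rw [e1, smul_zero, zero_add, ← hpowsucc (q+1) k₂]
    have hDK0 : ∀ k ∈ K, D k = 0 := by
      intro k hkK
      obtain ⟨k', _, hk'⟩ := hchain N k hkK
      rw [hk', hpowsucc' N k', hN k', map_zero]
    have hrange : ∀ y, D y ∈ Submodule.span F {D a} := by
      intro y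
      obtain ⟨c, k, hkK, rfl⟩ := hdec y
      rw [map_add, map_smul, hDK0 k hkK, add_zero]
      exact Submodule.smul_mem _ _ (Submodule.mem_span_singleton_self _)
    -- K ≤ span {D a}, so finrank K ≤ 1, contradiction
    have hKle : K ≤ Submodule.span F {D a} := by
      intro k hkK
      obtain ⟨z, rfl⟩ := hKR k hkK
      exact hrange z
    have h5 : finrank F K ≤ finrank F (Submodule.span F {D a}) :=
      Submodule.finrank_mono hKle
    have h6 : finrank F (Submodule.span F {D a}) ≤ 1 := by
      rcases eq_or_ne (D a) 0 with h | h
      · rw [h, Submodule.span_zero_singleton, finrank_bot]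
        omega
      · rw [finrank_span_singleton h]
    omega
  have hDa : D a ≠ 0 := fun h => hD2 (by rw [h, map_zero])
  -- linear independence of D a and D (D a)
  have hind2 : ∀ c₁ c₂ : F, c₁ • D a + c₂ • D (D a) = 0 → c₁ = 0 ∧ c₂ = 0 := by
    intro c₁ c₂ hc
    have hc1 : c₁ = 0 := by
      by_contra hc1
      have hl : D a = (-(c₁⁻¹ * c₂)) • D (D a) := by
        have h' : c₁⁻¹ • (c₁ • D a + c₂ • D (D a)) = 0 := by rw [hc, smul_zero]
        rw [smul_add, smul_smul, smul_smul, inv_mul_cancel₀ hc1, one_smul] at h'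
        rw [neg_smul, eq_neg_iff_add_eq_zero]
        exact h'
      set lam : F := -(c₁⁻¹ * c₂) with hlam
      have hiter : ∀ n : ℕ, D a = lam ^ n • (D ^ n) (D a) := by
        intro n
        induction n with
        | zero => simp
        | succ q ih =>
          have step : (D ^ q) (D a) = lam • (D ^ (q + 1)) (D a) := by
            conv_lhs => rw [hl]
            rw [map_smul, hpowsucc q (D a)]
          conv_lhs => rw [ih, step]
          rw [smul_smul, ← pow_succ]
      have := hiter N
      rw [hN (D a), smul_zero] at this
      exact hDa this
    refine ⟨hc1, ?_⟩
    rw [hc1, zero_smul, zero_add] at hc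
    exact (smul_eq_zero.1 hc).resolve_right hD2
  -- full linear independence
  have hli : LinearIndependent F ![a, D a, D (D a)] := by
    rw [Fintype.linearIndependent_iff]
    intro g hg
    rw [Fin.sum_univ_three] at hg
    simp only [Matrix.cons_val_zero, Matrix.cons_val_one, Matrix.head_cons,
      Matrix.cons_val_two, Matrix.tail_cons] at hg
    have hg0 : g 0 = 0 := by
      by_contra hg0
      apply ha
      have : g 0 • a = -(g 1 • D a + g 2 • D (D a)) := by
        rw [eq_neg_iff_add_eq_zero, ← add_assoc]
        exact hg
      have ha' : a = (g 0)⁻¹ • (g 0 • a) := by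
        rw [smul_smul, inv_mul_cancel₀ hg0, one_smul]
      rw [ha', this]
      refine Submodule.smul_mem _ _ (neg_mem (add_mem ?_ ?_))
      · exact Submodule.smul_mem _ _ (hDK a)
      · exact Submodule.smul_mem _ _ (hDK (D a))
    rw [hg0, zero_smul, zero_add] at hg
    obtain ⟨h1, h2⟩ := hind2 _ _ hg
    intro i
    fin_cases i <;> assumption
  have hcard : Fintype.card (Fin 3) = finrank F L := by simp [hdim]
  refine ⟨a, basisOfLinearIndependentOfCardEqFinrank hli hcard, ?_, ?_, ?_⟩ <;>
    simp [coe_basisOfLinearIndependentOfCardEqFinrank, hDdef]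
end
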